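/- arXiv:2605.07015 — 9 statements merged into one kernel-verified Lean document; each statement's English description precedes it below -/
import Mathlib

section
/- Let n, m be positive integers and a, b integers with am = bn. Define the translated m-valued map ψ(s) = φ_{m,b}(s) + 1/(2nm) (mod 1). Then for every s in [0,1), φ_{n,a}(s) ∩ ψ(s) = ∅, i.e. the pair (φ_{n,a}, ψ) has no domain coincidence points. -/
/-- The `n`-valued power map of degree `a` on the circle `ℝ/ℤ`:
`φ_{n,a}(s) = {(a/n)s + u/n mod 1 : u = 0,…,n-1}`. -/
noncomputable def powerMap (n : ℕ) (a : ℤ) (s : ℝ) : Set UnitAddCircle :=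
  {y | ∃ u : ℕ, u < n ∧ y = ↑(((a : ℝ) / n) * s + u / n)}

theorem stmt_3 (n m : ℕ) (a b : ℤ) (hn : 0 < n) (hm : 0 < m)
    (h : a * m = b * n) (s : ℝ) (hs : s ∈ Set.Ico (0 : ℝ) 1) :
    powerMap n a s ∩
      ((fun y => y + ((1 / (2 * (n : ℝ) * m) : ℝ) : UnitAddCircle)) '' powerMap m b s) = ∅ := by
  ext y
  simp only [Set.mem_inter_iff, Set.mem_image, Set.mem_empty_iff_false, iff_false, powerMap,
    Set.mem_setOf_eq, not_and, not_exists]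
  rintro ⟨u, hu, rfl⟩ z ⟨v, hv, rfl⟩ hz
  have hn0 : (n : ℝ) ≠ 0 := Nat.cast_ne_zero.mpr hn.ne'
  have hm0 : (m : ℝ) ≠ 0 := Nat.cast_ne_zero.mpr hm.ne'
  have hab : (a : ℝ) / n = (b : ℝ) / m := by
    rw [div_eq_div_iff hn0 hm0]
    exact_mod_cast h
  rw [← AddCircle.coe_add] at hz
  have hz0 : ((((b : ℝ) / m * s + v / m + 1 / (2 * n * m)) -
      ((a : ℝ) / n * s + u / n) : ℝ) : UnitAddCircle) = 0 := by
    rw [AddCircle.coe_sub, hz, sub_self]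
  obtain ⟨k, hk⟩ := (AddCircle.coe_eq_zero_iff _).mp hz0
  rw [hab, zsmul_eq_mul, mul_one] at hk
  have hk' : (k : ℝ) * (2 * n * m) = ((v : ℝ) / m + 1 / (2 * n * m) - u / n) * (2 * n * m) := by
    rw [hk]; ring
  rw [sub_mul, add_mul, div_mul_eq_mul_div, div_mul_eq_mul_div, div_mul_eq_mul_div,
    mul_div_assoc] at hk'
  have hk'' : (k : ℝ) * (2 * n * m) = (v : ℝ) * (2 * n) + 1 - u * (2 * m) := by
    rw [hk']
    field_simp
  have hZ : (k : ℤ) * (2 * n * m) = (v : ℤ) * (2 * n) + 1 - u * (2 * m) := by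
    exact_mod_cast hk''
  have h2 : (2 : ℤ) ∣ 1 := ⟨k * n * m - v * n + u * m, by linarith⟩
  norm_num at h2
end

section
/- Let n, m be positive integers with gcd(n,m) = 1 and a, b integers with am ≠ bn. Then the set of s in [0,1) such that φ_{n,a}(s) ∩ φ_{m,b}(s) ≠ ∅ is exactly {0, 1/k, 2/k, ..., (k-1)/k} where k = |am - bn|. In particular, the number of domain coincidence points of (φ_{n,a}, φ_{m,b}) is |am - bn|. -/
lemma unitAddCircle_coe_eq_coe (x y : ℝ) :
    (x : UnitAddCircle) = y ↔ ∃ t : ℤ, x - y = t := by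
  rw [← sub_eq_zero, show ((x : UnitAddCircle) - y) = ((x - y : ℝ) : UnitAddCircle) from rfl,
    AddCircle.coe_eq_zero_iff]
  simp [eq_comm]

theorem stmt_4 (n m : ℕ) (a b : ℤ) (hn : 0 < n) (hm : 0 < m)
    (hgcd : Nat.gcd n m = 1) (h : a * m ≠ b * n) :
    {s : ℝ | s ∈ Set.Ico (0 : ℝ) 1 ∧ (powerMap n a s ∩ powerMap m b s).Nonempty} =
      {s : ℝ | ∃ j : ℕ, j < (a * m - b * n).natAbs ∧ s = (j : ℝ) / (a * m - b * n).natAbs} ∧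
    {s : ℝ | s ∈ Set.Ico (0 : ℝ) 1 ∧ (powerMap n a s ∩ powerMap m b s).Nonempty}.ncard =
      (a * m - b * n).natAbs := by
  set c : ℤ := a * m - b * n with hc
  have hc0 : c ≠ 0 := sub_ne_zero.mpr h
  set k : ℕ := c.natAbs with hk
  have hk0 : k ≠ 0 := Int.natAbs_ne_zero.mpr hc0
  have hnR : (n : ℝ) ≠ 0 := Nat.cast_ne_zero.mpr hn.ne'
  have hmR : (m : ℝ) ≠ 0 := Nat.cast_ne_zero.mpr hm.ne'
  have hkR : (k : ℝ) ≠ 0 := Nat.cast_ne_zero.mpr hk0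
  have hcR : (c : ℝ) ≠ 0 := Int.cast_ne_zero.mpr hc0
  have hkc : |(c : ℝ)| = (k : ℝ) := by
    rw [hk, Nat.cast_natAbs, Int.cast_abs]
  have hcop : IsCoprime (n : ℤ) (m : ℤ) := by
    rw [Int.isCoprime_iff_gcd_eq_one, Int.gcd_natCast_natCast]
    exact hgcd
  obtain ⟨x, y, hxy⟩ := id hcop
  have main : {s : ℝ | s ∈ Set.Ico (0 : ℝ) 1 ∧ (powerMap n a s ∩ powerMap m b s).Nonempty} =
      {s : ℝ | ∃ j : ℕ, j < k ∧ s = (j : ℝ) / k} := by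
    ext s
    simp only [Set.mem_setOf_eq, Set.mem_Ico]
    constructor
    · rintro ⟨⟨hs0, hs1⟩, p, ⟨u, hu, hpu⟩, ⟨v, hv, hpv⟩⟩
      rw [hpu] at hpv
      obtain ⟨t, ht⟩ := (unitAddCircle_coe_eq_coe _ _).mp hpv
      set w : ℤ := t * n * m - u * m + v * n with hw
      have hws : (c : ℝ) * s = (w : ℝ) := by
        field_simp at ht
        push_cast [hc, hw]
        linear_combination ht
      have hsw : s = (w : ℝ) / c := by
        rw [eq_div_iff hcR, mul_comm]
        exact hws
      refine ⟨w.natAbs, ?_, ?_⟩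
      · have h1 : |(w : ℝ)| < |(c : ℝ)| := by
          rw [← hws, abs_mul, abs_of_nonneg hs0]
          calc |(c:ℝ)| * s < |(c:ℝ)| * 1 := by
                apply mul_lt_mul_of_pos_left hs1 (abs_pos.mpr hcR)
            _ = |(c:ℝ)| := mul_one _
        have h2 : ((w.natAbs : ℝ)) < (k : ℝ) := by
          rw [Nat.cast_natAbs, Int.cast_abs, ← hkc]
          exact h1
        exact_mod_cast h2
      · rw [hsw, Nat.cast_natAbs, Int.cast_abs, ← hkc, ← abs_div]
        rw [abs_of_nonneg (hsw ▸ hs0)]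
    · rintro ⟨j, hj, hsj⟩
      have hjk : (j : ℝ) < (k : ℝ) := Nat.cast_lt.mpr hj
      have hs0 : 0 ≤ s := hsj ▸ div_nonneg (Nat.cast_nonneg _) (Nat.cast_nonneg _)
      have hs1 : s < 1 := by
        rw [hsj, div_lt_one (by positivity)]
        exact hjk
      set w : ℤ := c.sign * j with hw
      have hsgn : ((c.sign : ℝ)) * (k : ℝ) = (c : ℝ) := by
        rw [hk, Nat.cast_natAbs]
        exact_mod_cast Int.sign_mul_abs c
      have hws : (c : ℝ) * s = (w : ℝ) := by
        rw [hsj, hw]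
        push_cast
        rw [← hsgn]
        field_simp
      have hnZ : (0 : ℤ) < n := Int.natCast_pos.mpr hn
      have hmZ : (0 : ℤ) < m := Int.natCast_pos.mpr hm
      set u : ℕ := ((-w * y) % (n : ℤ)).toNat with hu'
      set v : ℕ := ((w * x) % (m : ℤ)).toNat with hv'
      have huZ : (u : ℤ) = (-w * y) % n := Int.toNat_of_nonneg (Int.emod_nonneg _ hnZ.ne')
      have hvZ : (v : ℤ) = (w * x) % m := Int.toNat_of_nonneg (Int.emod_nonneg _ hmZ.ne')
      have hu : u < n := by
        have := Int.emod_lt_of_pos (-w * y) hnZ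
        omega
      have hv : v < m := by
        have := Int.emod_lt_of_pos (w * x) hmZ
        omega
      have hdn : (n : ℤ) ∣ w + u * m - v * n := by
        have huZ' : (u : ℤ) = -w * y - n * ((-w * y) / n) := by rw [huZ, Int.emod_def]
        refine ⟨w * x - ((-w * y) / n) * m - v, ?_⟩
        rw [huZ']
        linear_combination (-w) * hxy
      have hdm : (m : ℤ) ∣ w + u * m - v * n := by
        have hvZ' : (v : ℤ) = w * x - m * ((w * x) / m) := by rw [hvZ, Int.emod_def]
        refine ⟨w * y + ((w * x) / m) * n + u, ?_⟩
        rw [hvZ']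
        linear_combination (-w) * hxy
      obtain ⟨t, ht⟩ := hcop.mul_dvd hdn hdm
      have htR : (w : ℝ) + u * m - v * n = (n : ℝ) * m * t := by exact_mod_cast congrArg (fun z : ℤ => (z : ℝ)) ht
      refine ⟨⟨hs0, hs1⟩, ↑(((a : ℝ) / n) * s + u / n), ⟨u, hu, rfl⟩, v, hv, ?_⟩
      rw [unitAddCircle_coe_eq_coe]
      refine ⟨t, ?_⟩
      have hcR' : ((a : ℝ) * m - b * n) * s = (w : ℝ) := by
        push_cast [hc] at hws
        linear_combination hws
      field_simp
      linear_combination hcR' + htR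
  refine ⟨main, ?_⟩
  rw [main]
  have himg : {s : ℝ | ∃ j : ℕ, j < k ∧ s = (j : ℝ) / k} =
      (fun j : ℕ => (j : ℝ) / k) '' ↑(Finset.range k) := by
    ext s
    simp [eq_comm]
  rw [himg, Set.ncard_image_of_injOn, Set.ncard_coe_finset, Finset.card_range]
  intro i _ j _ hij
  field_simp at hij
  exact_mod_cast hij
end

section
/- Let n, m be positive integers with gcd(n,m) = 1 and a, b integers with am ≠ bn. Then the set of pairs (s,y) in [0,1) × (ℝ/ℤ) with y ∈ φ_{n,a}(s) ∩ φ_{m,b}(s) (the graph intersection set) has cardinality exactly |am - bn|. -/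
lemma coe_eq_coe_iff' {x y : ℝ} : (x : UnitAddCircle) = y ↔ ∃ k : ℤ, x - y = k := by
  rw [show (x : UnitAddCircle) = y ↔ ((x - y : ℝ) : UnitAddCircle) = 0 by
    constructor
    · intro h; rw [← sub_eq_zero] at h; exact_mod_cast h
    · intro h; have : ((x - y : ℝ) : UnitAddCircle) = ((0:ℝ):UnitAddCircle) := by
        simpa using h
      have := sub_eq_zero.mp (by exact_mod_cast this : ((x:UnitAddCircle) - y) = 0)
      exact this]
  rw [AddCircle.coe_eq_zero_iff]
  constructor
  · rintro ⟨k, hk⟩; exact ⟨k, by simpa [zsmul_eq_mul] using hk.symm⟩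
  · rintro ⟨k, hk⟩; exact ⟨k, by simpa [zsmul_eq_mul] using hk.symm⟩

lemma uniq_y (n m : ℕ) (a b : ℤ) (hn : 0 < n) (hm : 0 < m)
    (hgcd : Nat.gcd n m = 1) (s : ℝ) {y1 y2 : UnitAddCircle}
    (h1 : y1 ∈ powerMap n a s ∩ powerMap m b s)
    (h2 : y2 ∈ powerMap n a s ∩ powerMap m b s) : y1 = y2 := by
  obtain ⟨⟨u1, hu1, hy1⟩, ⟨v1, hv1, he1⟩⟩ := h1
  obtain ⟨⟨u2, hu2, hy2⟩, ⟨v2, hv2, he2⟩⟩ := h2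
  rw [hy1] at he1
  rw [hy2] at he2
  rw [coe_eq_coe_iff'] at he1 he2
  obtain ⟨k1, hk1⟩ := he1
  obtain ⟨k2, hk2⟩ := he2
  have hn' : (n:ℝ) ≠ 0 := by positivity
  have hm' : (m:ℝ) ≠ 0 := by positivity
  have hr : (m:ℝ) * u1 - m * u2 - (n * v1 - n * v2) = n * m * (k1 - k2) := by
    field_simp at hk1 hk2
    linear_combination hk1 - hk2
  have key : (m : ℤ) * u1 - m * u2 - (n * v1 - n * v2) = n * m * (k1 - k2) := by
    exact_mod_cast hr
  have hdvd : (n : ℤ) ∣ (m : ℤ) * ((u1 : ℤ) - u2) := by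
    refine ⟨(v1 : ℤ) - v2 + m * (k1 - k2), by linarith⟩
  have hcop : IsCoprime (n : ℤ) (m : ℤ) := by
    rw [Int.isCoprime_iff_gcd_eq_one]
    simpa using hgcd
  have hdvd2 : (n : ℤ) ∣ ((u1 : ℤ) - u2) := hcop.dvd_of_dvd_mul_left hdvd
  have hz : ((u1 : ℤ) - u2) = 0 := by
    refine Int.eq_zero_of_dvd_of_natAbs_lt_natAbs hdvd2 ?_
    simp only [Int.natAbs_natCast]
    omega
  have : u1 = u2 := by omega
  rw [hy1, hy2, this]

lemma exists_y (n m : ℕ) (a b : ℤ) (hn : 0 < n) (hm : 0 < m)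
    (hgcd : Nat.gcd n m = 1) (s : ℝ) (k : ℤ)
    (hk : ((a * m - b * n : ℤ) : ℝ) * s = k) :
    ∃ y, y ∈ powerMap n a s ∩ powerMap m b s := by
  have hbez : (1 : ℤ) = n * Nat.gcdA n m + m * Nat.gcdB n m := by
    have := Nat.gcd_eq_gcd_ab n m
    rwa [hgcd] at this
  set u0 : ℤ := -k * Nat.gcdB n m with hu0
  set v0 : ℤ := k * Nat.gcdA n m with hv0
  have hbal : k + u0 * m - v0 * n = 0 := by
    have : k * (1 : ℤ) = k * (n * Nat.gcdA n m + m * Nat.gcdB n m) := by rw [← hbez]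
    rw [hu0, hv0]; ring_nf; ring_nf at this; linarith
  set u : ℤ := u0 % n with hu
  set v : ℤ := v0 % m with hv
  have hn0 : (n : ℤ) ≠ 0 := by exact_mod_cast hn.ne'
  have hm0 : (m : ℤ) ≠ 0 := by exact_mod_cast hm.ne'
  have hu_range : 0 ≤ u ∧ u < n := ⟨Int.emod_nonneg _ hn0, Int.emod_lt_of_pos _ (by exact_mod_cast hn)⟩
  have hv_range : 0 ≤ v ∧ v < m := ⟨Int.emod_nonneg _ hm0, Int.emod_lt_of_pos _ (by exact_mod_cast hm)⟩
  set t : ℤ := v0 / m - u0 / n with ht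
  have hmod : k + u * m - v * n = n * m * t := by
    have h1 : u0 = n * (u0 / n) + u := (Int.mul_ediv_add_emod u0 n).symm
    have h2 : v0 = m * (v0 / m) + v := (Int.mul_ediv_add_emod v0 m).symm
    have : k + (u0 - n * (u0 / n)) * m - (v0 - m * (v0 / m)) * n = n * m * t := by
      rw [ht]; linear_combination hbal
    calc k + u * m - v * n = k + (u0 - n * (u0 / n)) * m - (v0 - m * (v0 / m)) * n := by
          rw [show u = u0 - n * (u0/n) by omega, show v = v0 - m * (v0/m) by omega]
      _ = n * m * t := this
  have hmodR : (k : ℝ) + (u:ℝ) * m - (v:ℝ) * n = n * m * t := by exact_mod_cast hmod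
  have hut : ((u.toNat : ℕ) : ℝ) = (u : ℝ) := by
    norm_cast; omega
  have hvt : ((v.toNat : ℕ) : ℝ) = (v : ℝ) := by
    norm_cast; omega
  refine ⟨((a : ℝ) / n * s + (u.toNat : ℕ) / n : ℝ), ⟨u.toNat, by omega, rfl⟩, v.toNat, by omega, ?_⟩
  rw [coe_eq_coe_iff']
  refine ⟨t, ?_⟩
  have hn' : (n:ℝ) ≠ 0 := by positivity
  have hm' : (m:ℝ) ≠ 0 := by positivity
  rw [hut, hvt]
  push_cast at hk
  field_simp
  linear_combination hk + hmodR

theorem stmt_5 (n m : ℕ) (a b : ℤ) (hn : 0 < n) (hm : 0 < m)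
    (hgcd : Nat.gcd n m = 1) (h : a * m ≠ b * n) :
    {p : ℝ × UnitAddCircle | p.1 ∈ Set.Ico (0 : ℝ) 1 ∧
        p.2 ∈ powerMap n a p.1 ∩ powerMap m b p.1}.ncard = (a * m - b * n).natAbs := by
  set c : ℤ := a * m - b * n with hc
  have hc0 : c ≠ 0 := sub_ne_zero.mpr h
  set D : ℕ := c.natAbs with hD
  have hD0 : 0 < D := Int.natAbs_pos.mpr hc0
  have hDr : (0:ℝ) < D := by exact_mod_cast hD0
  set S := {p : ℝ × UnitAddCircle | p.1 ∈ Set.Ico (0 : ℝ) 1 ∧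
      p.2 ∈ powerMap n a p.1 ∩ powerMap m b p.1} with hS
  have hinj : Set.InjOn Prod.fst S := by
    rintro ⟨s1, y1⟩ h1 ⟨s2, y2⟩ h2 hs
    simp only [Prod.fst] at hs
    subst hs
    exact Prod.ext rfl (uniq_y n m a b hn hm hgcd s1 h1.2 h2.2)
  have hn' : (n:ℝ) ≠ 0 := by positivity
  have hm' : (m:ℝ) ≠ 0 := by positivity
  have himg : Prod.fst '' S = (fun j : ℕ => (j:ℝ)/D) '' Set.Iio D := by
    ext s
    constructor
    · rintro ⟨⟨s', y⟩, ⟨hIco, hmem⟩, rfl⟩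
      obtain ⟨u, hu, hyu⟩ := hmem.1
      obtain ⟨v, hv, hyv⟩ := hmem.2
      rw [hyu] at hyv
      rw [coe_eq_coe_iff'] at hyv
      obtain ⟨k, hk⟩ := hyv
      have hK : (c:ℝ) * s' = ((n*m*k - u*m + v*n : ℤ):ℝ) := by
        push_cast [hc]
        field_simp at hk
        linear_combination hk
      set K : ℤ := n*m*k - u*m + v*n with hKd
      have habs : (D:ℝ) * s' = (K.natAbs : ℝ) := by
        have h1 : |(c:ℝ)| * s' = |(c:ℝ) * s'| := by
          rw [abs_mul, abs_of_nonneg hIco.1]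
        have h2 : ((D:ℕ):ℝ) = |(c:ℝ)| := by
          rw [hD, Nat.cast_natAbs, Int.cast_abs]
        rw [h2, h1, hK, Nat.cast_natAbs, Int.cast_abs]
      refine ⟨K.natAbs, ?_, ?_⟩
      · have hlt : (K.natAbs : ℝ) < D := by
          rw [← habs]
          have := hIco.2
          nlinarith
        exact_mod_cast hlt
      · simp only
        rw [div_eq_iff hDr.ne']
        linarith [habs]
    · rintro ⟨j, hj, rfl⟩
      simp only [Set.mem_Iio] at hj
      have hcs : (c:ℝ) * ((j:ℝ)/D) = ((c.sign * j : ℤ) : ℝ) := by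
        have hsign : ((c.sign : ℝ)) * D = (c : ℝ) := by
          rw [hD, Nat.cast_natAbs, Int.cast_abs]
          have h0 := congrArg (fun z : ℤ => (z : ℝ)) (Int.sign_mul_natAbs c)
          push_cast at h0
          exact h0
        push_cast
        field_simp
        linear_combination (-(j:ℝ)) * hsign
      obtain ⟨y, hy⟩ := exists_y n m a b hn hm hgcd ((j:ℝ)/D) (c.sign * j) (by rw [← hc]; exact hcs)
      refine ⟨((j:ℝ)/D, y), ⟨⟨by positivity, ?_⟩, hy⟩, rfl⟩
      rw [div_lt_one hDr]
      exact_mod_cast hj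
  rw [← Set.ncard_image_of_injOn hinj, himg,
    Set.ncard_image_of_injOn (fun x _ y _ hxy => by
      field_simp at hxy; exact_mod_cast hxy)]
  rw [← Finset.coe_range, Set.ncard_coe_finset, Finset.card_range, hD]
end

section
/- Let n, m be positive integers and a, b integers with am ≠ bn, and let w = gcd(n,m). Then the set of s in [0,1) with φ_{n,a}(s) ∩ φ_{m,b}(s) ≠ ∅ equals {0, w/k, 2w/k, ..., (k-w)/k} where k = |am - bn|; in particular its cardinality is |am - bn| / gcd(n,m). -/
lemma coe_unit_eq (x y : ℝ) : ((x : UnitAddCircle) = (y : UnitAddCircle)) ↔ ∃ t : ℤ, x - y = t := by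
  rw [← sub_eq_zero, ← AddCircle.coe_sub, AddCircle.coe_eq_zero_iff]
  constructor
  · rintro ⟨t, ht⟩; exact ⟨t, by simpa using ht.symm⟩
  · rintro ⟨t, ht⟩; exact ⟨t, by simpa using ht.symm⟩

lemma lemA (n m : ℕ) (a b : ℤ) (hn : 0 < n) (hm : 0 < m) (s : ℝ) :
    (powerMap n a s ∩ powerMap m b s).Nonempty ↔
      ∃ z : ℤ, ((a * m - b * n : ℤ) : ℝ) * s = (Nat.gcd n m : ℝ) * z := by
  have hn' : (n : ℝ) ≠ 0 := Nat.cast_ne_zero.2 hn.ne'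
  have hm' : (m : ℝ) ≠ 0 := Nat.cast_ne_zero.2 hm.ne'
  have hwn : (Nat.gcd n m : ℤ) ∣ n := Int.natCast_dvd_natCast.2 (Nat.gcd_dvd_left n m)
  have hwm : (Nat.gcd n m : ℤ) ∣ m := Int.natCast_dvd_natCast.2 (Nat.gcd_dvd_right n m)
  constructor
  · rintro ⟨y, ⟨u, hu, rfl⟩, ⟨v, hv, hy⟩⟩
    rw [coe_unit_eq] at hy
    obtain ⟨t, ht⟩ := hy
    have h2 : ((a * m - b * n : ℤ) : ℝ) * s = ((n * m * t - u * m + v * n : ℤ) : ℝ) := by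
      push_cast
      field_simp at ht
      linarith [ht]
    have hdvd : (Nat.gcd n m : ℤ) ∣ (n * m * t - u * m + v * n) := by
      have h1 : (Nat.gcd n m : ℤ) ∣ (n:ℤ) * m * t := Dvd.dvd.mul_right (hwn.mul_right m) t
      have h2 : (Nat.gcd n m : ℤ) ∣ (u:ℤ) * m := hwm.mul_left u
      have h3 : (Nat.gcd n m : ℤ) ∣ (v:ℤ) * n := hwn.mul_left v
      exact dvd_add (dvd_sub h1 h2) h3
    obtain ⟨z, hz⟩ := hdvd
    exact ⟨z, by rw [h2, hz]; push_cast; ring⟩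
  · rintro ⟨z, hz⟩
    set x := Nat.gcdA n m with hx
    set y := Nat.gcdB n m with hy
    have hbez : (Nat.gcd n m : ℤ) = n * x + m * y := Nat.gcd_eq_gcd_ab n m
    set U : ℤ := -(y * z) with hU
    set V : ℤ := x * z with hV
    set u : ℕ := (U % n).toNat with hu
    set v : ℕ := (V % m).toNat with hv
    set q : ℤ := U / n with hq
    set r : ℤ := V / m with hr
    have hn0 : (0:ℤ) < n := by exact_mod_cast hn
    have hm0 : (0:ℤ) < m := by exact_mod_cast hm
    have huc : (u : ℤ) = U - n * q := by
      rw [hu, Int.toNat_of_nonneg (Int.emod_nonneg U hn0.ne')]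
      rw [Int.emod_def]
    have hvc : (v : ℤ) = V - m * r := by
      rw [hv, Int.toNat_of_nonneg (Int.emod_nonneg V hm0.ne')]
      rw [Int.emod_def]
    have hult : u < n := by
      have := Int.emod_lt_of_pos U hn0
      have h0 := Int.emod_nonneg U hn0.ne'
      omega
    have hvlt : v < m := by
      have := Int.emod_lt_of_pos V hm0
      have h0 := Int.emod_nonneg V hm0.ne'
      omega
    set t : ℤ := r - q with htdef
    have hint : ((n:ℤ) * m * t - u * m + v * n) = (Nat.gcd n m : ℤ) * z := by
      rw [huc, hvc, htdef, hbez, hU, hV]; ring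
    refine ⟨↑(((a : ℝ) / n) * s + u / n), ⟨u, hult, rfl⟩, ⟨v, hvlt, ?_⟩⟩
    rw [coe_unit_eq]
    refine ⟨t, ?_⟩
    have h2 : ((a * m - b * n : ℤ) : ℝ) * s = ((n * m * t - u * m + v * n : ℤ) : ℝ) := by
      rw [hz]; exact_mod_cast congrArg (fun w : ℤ => (w : ℝ)) hint.symm
    push_cast at h2
    field_simp
    linarith [h2]

lemma lemB (n m : ℕ) (a b : ℤ) (hn : 0 < n) (hm : 0 < m) (h : a * m ≠ b * n) :
    {s : ℝ | s ∈ Set.Ico (0 : ℝ) 1 ∧ ∃ z : ℤ, ((a * m - b * n : ℤ) : ℝ) * s = (Nat.gcd n m : ℝ) * z} =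
      {s : ℝ | ∃ j : ℕ, j < (a * m - b * n).natAbs / Nat.gcd n m ∧
        s = (j : ℝ) * (Nat.gcd n m : ℝ) / (a * m - b * n).natAbs} := by
  set c : ℤ := a * m - b * n with hc
  set w : ℕ := Nat.gcd n m with hw
  set k : ℕ := c.natAbs with hkdef
  have hc0 : c ≠ 0 := sub_ne_zero.2 h
  have hw0 : 0 < w := Nat.gcd_pos_of_pos_left m hn
  have hk0 : 0 < k := Int.natAbs_pos.2 hc0
  have hwk : w ∣ k := by
    have h1 : (w:ℤ) ∣ c := by
      refine dvd_sub ?_ ?_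
      · exact Dvd.dvd.mul_left (Int.natCast_dvd_natCast.2 (Nat.gcd_dvd_right n m)) a
      · exact Dvd.dvd.mul_left (Int.natCast_dvd_natCast.2 (Nat.gcd_dvd_left n m)) b
    simpa [hkdef] using Int.natAbs_dvd_natAbs.2 h1
  have hwR : (0:ℝ) < (w:ℝ) := by exact_mod_cast hw0
  have hkR : (0:ℝ) < (k:ℝ) := by exact_mod_cast hk0
  have habs : ((k:ℝ)) = |(c:ℝ)| := by
    simp [hkdef, Nat.cast_natAbs, Int.cast_abs]
  ext s
  simp only [Set.mem_setOf_eq, Set.mem_Ico]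
  constructor
  · rintro ⟨⟨hs0, hs1⟩, z, hz⟩
    rcases lt_or_gt_of_ne hc0 with hneg | hpos
    · -- c < 0
      have hcR : (c:ℝ) < 0 := by exact_mod_cast hneg
      have hkc : (k:ℝ) = -(c:ℝ) := by rw [habs, abs_of_neg hcR]
      have hz0 : (z:ℝ) ≤ 0 := by nlinarith
      have hzn : z ≤ 0 := by exact_mod_cast hz0
      refine ⟨(-z).toNat, ?_, ?_⟩
      · rw [Nat.lt_div_iff_mul_lt' hwk]
        have hlt : (w:ℝ) * ((-z).toNat : ℝ) < k := by
          have : ((-z).toNat : ℝ) = -(z:ℝ) := by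
            exact_mod_cast Int.toNat_of_nonneg (neg_nonneg.2 hzn)
          rw [this, hkc]; nlinarith
        exact_mod_cast hlt
      · have : ((-z).toNat : ℝ) = -(z:ℝ) := by
          exact_mod_cast Int.toNat_of_nonneg (neg_nonneg.2 hzn)
        rw [this, hkc]
        field_simp
        nlinarith [hz]
    · -- c > 0
      have hcR : (0:ℝ) < (c:ℝ) := by exact_mod_cast hpos
      have hkc : (k:ℝ) = (c:ℝ) := by rw [habs, abs_of_pos hcR]
      have hz0 : (0:ℝ) ≤ (z:ℝ) := by nlinarith
      have hzn : 0 ≤ z := by exact_mod_cast hz0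
      refine ⟨z.toNat, ?_, ?_⟩
      · rw [Nat.lt_div_iff_mul_lt' hwk]
        have hlt : (w:ℝ) * (z.toNat : ℝ) < k := by
          have : (z.toNat : ℝ) = (z:ℝ) := by exact_mod_cast Int.toNat_of_nonneg hzn
          rw [this, hkc]; nlinarith
        exact_mod_cast hlt
      · have : (z.toNat : ℝ) = (z:ℝ) := by exact_mod_cast Int.toNat_of_nonneg hzn
        rw [this, hkc]
        field_simp
        nlinarith [hz]
  · rintro ⟨j, hj, rfl⟩
    have hjw : w * j < k := (Nat.lt_div_iff_mul_lt' hwk j).1 hj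
    have hjwR : (w:ℝ) * j < k := by exact_mod_cast hjw
    have hs0 : (0:ℝ) ≤ (j:ℝ) * w / k := by positivity
    have hs1 : (j:ℝ) * w / k < 1 := by rw [div_lt_one hkR]; nlinarith
    refine ⟨⟨hs0, hs1⟩, ?_⟩
    rcases lt_or_gt_of_ne hc0 with hneg | hpos
    · have hcR : (c:ℝ) < 0 := by exact_mod_cast hneg
      refine ⟨-j, ?_⟩
      push_cast
      rw [habs, abs_of_neg hcR]
      field_simp [hcR.ne]
    · have hcR : (0:ℝ) < (c:ℝ) := by exact_mod_cast hpos
      refine ⟨j, ?_⟩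
      push_cast
      rw [habs, abs_of_pos hcR]
      field_simp [hcR.ne']

theorem stmt_6 (n m : ℕ) (a b : ℤ) (hn : 0 < n) (hm : 0 < m)
    (h : a * m ≠ b * n) :
    {s : ℝ | s ∈ Set.Ico (0 : ℝ) 1 ∧ (powerMap n a s ∩ powerMap m b s).Nonempty} =
      {s : ℝ | ∃ j : ℕ, j < (a * m - b * n).natAbs / Nat.gcd n m ∧
        s = (j : ℝ) * (Nat.gcd n m : ℝ) / (a * m - b * n).natAbs} ∧
    {s : ℝ | s ∈ Set.Ico (0 : ℝ) 1 ∧ (powerMap n a s ∩ powerMap m b s).Nonempty}.ncard =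
      (a * m - b * n).natAbs / Nat.gcd n m := by
  have hEq : {s : ℝ | s ∈ Set.Ico (0 : ℝ) 1 ∧ (powerMap n a s ∩ powerMap m b s).Nonempty} =
      {s : ℝ | ∃ j : ℕ, j < (a * m - b * n).natAbs / Nat.gcd n m ∧
        s = (j : ℝ) * (Nat.gcd n m : ℝ) / (a * m - b * n).natAbs} := by
    rw [← lemB n m a b hn hm h]
    ext s
    simp only [Set.mem_setOf_eq]
    exact and_congr_right fun _ => lemA n m a b hn hm s
  refine ⟨hEq, ?_⟩
  rw [hEq]
  set N : ℕ := (a * m - b * n).natAbs / Nat.gcd n m with hN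
  set w : ℕ := Nat.gcd n m with hw
  set k : ℕ := (a * m - b * n).natAbs with hk
  have hw0 : 0 < w := Nat.gcd_pos_of_pos_left m hn
  have hk0 : 0 < k := Int.natAbs_pos.2 (sub_ne_zero.2 h)
  have hwR : (0:ℝ) < (w:ℝ) := by exact_mod_cast hw0
  have hkR : (0:ℝ) < (k:ℝ) := by exact_mod_cast hk0
  have himg : {s : ℝ | ∃ j : ℕ, j < N ∧ s = (j : ℝ) * (w : ℝ) / k} =
      (fun j : ℕ => (j : ℝ) * (w : ℝ) / k) '' Set.Iio N := by
    ext s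
    simp only [Set.mem_setOf_eq, Set.mem_image, Set.mem_Iio]
    exact ⟨fun ⟨j, hj, hs⟩ => ⟨j, hj, hs.symm⟩, fun ⟨j, hj, hs⟩ => ⟨j, hj, hs.symm⟩⟩
  rw [himg, Set.ncard_image_of_injective _ ?_, ← Finset.coe_Iio, Set.ncard_coe_finset,
    Nat.card_Iio]
  intro j j' hjj
  simp only at hjj
  field_simp at hjj
  exact_mod_cast hjj
end

section
/- Let n, m be positive integers and a, b integers with am ≠ bn. Then the number of pairs (s,y) in [0,1) × (ℝ/ℤ) with y ∈ φ_{n,a}(s) ∩ φ_{m,b}(s) is exactly |am - bn|. -/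
open Finset

/-- The hom `(u,v) ↦ u*m - v*n : ZMod n × ZMod m → ZMod (n*m)`. -/
noncomputable def emap (n m : ℕ) : ZMod n × ZMod m →+ ZMod (n * m) :=
  ((ZMod.lift n ⟨zmultiplesHom _ ((m : ℤ) : ZMod (n*m)), by
      simp only [zmultiplesHom_apply, zsmul_eq_mul]
      exact_mod_cast ZMod.natCast_self (n*m)⟩).comp (AddMonoidHom.fst _ _))
  - ((ZMod.lift m ⟨zmultiplesHom _ ((n : ℤ) : ZMod (n*m)), by
      simp only [zmultiplesHom_apply, zsmul_eq_mul, mul_comm]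
      exact_mod_cast ZMod.natCast_self (n*m)⟩).comp (AddMonoidHom.snd _ _))

lemma emap_apply (n m : ℕ) (u v : ℤ) :
    emap n m ((u : ZMod n), (v : ZMod m)) = ((u * m - v * n : ℤ) : ZMod (n*m)) := by
  simp [emap, zsmul_eq_mul]

lemma gcd_dvd_mul (n m : ℕ) : Nat.gcd n m ∣ n * m :=
  (Nat.gcd_dvd_left n m).trans (dvd_mul_right n m)

lemma emap_range (n m : ℕ) :
    (emap n m).range = AddSubgroup.zmultiples ((Nat.gcd n m : ℤ) : ZMod (n*m)) := by
  apply le_antisymm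
  · rintro x ⟨⟨u, v⟩, rfl⟩
    obtain ⟨u', rfl⟩ := ZMod.intCast_surjective u
    obtain ⟨v', rfl⟩ := ZMod.intCast_surjective v
    rw [emap_apply]
    obtain ⟨w, hw⟩ : (Nat.gcd n m : ℤ) ∣ u' * m - v' * n :=
      dvd_sub (Dvd.dvd.mul_left (Int.natCast_dvd_natCast.2 (Nat.gcd_dvd_right n m)) _)
        (Dvd.dvd.mul_left (Int.natCast_dvd_natCast.2 (Nat.gcd_dvd_left n m)) _)
    rw [hw]
    exact ⟨w, by simp only [zsmul_eq_mul]; push_cast; ring⟩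
  · rw [AddSubgroup.zmultiples_le]
    refine ⟨((Nat.gcdB n m : ℤ), ((- Nat.gcdA n m : ℤ))), ?_⟩
    rw [emap_apply]
    congr 1
    have := Nat.gcd_eq_gcd_ab n m
    push_cast [this]
    ring

lemma emap_ker_card (n m : ℕ) (hn : 0 < n) (hm : 0 < m) :
    Nat.card (AddMonoidHom.ker (emap n m)) = Nat.gcd n m := by
  haveI : NeZero n := ⟨hn.ne'⟩
  haveI : NeZero m := ⟨hm.ne'⟩
  haveI : NeZero (n*m) := ⟨Nat.mul_ne_zero hn.ne' hm.ne'⟩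
  have h1 : Nat.card (ZMod n × ZMod m) = n * m := by
    simp [Nat.card_eq_fintype_card, ZMod.card]
  have h2 : Nat.card ((ZMod n × ZMod m) ⧸ (emap n m).ker) = n * m / Nat.gcd n m := by
    rw [Nat.card_congr (QuotientAddGroup.quotientKerEquivRange (emap n m)).toEquiv,
      emap_range]
    rw [show (((Nat.gcd n m : ℤ)) : ZMod (n*m)) = ((Nat.gcd n m : ℕ) : ZMod (n*m)) by
      push_cast; rfl]
    rw [Nat.card_zmultiples, ZMod.addOrderOf_coe _ (Nat.mul_ne_zero hn.ne' hm.ne')]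
    rw [Nat.gcd_comm, Nat.gcd_eq_left (gcd_dvd_mul n m)]
  have h3 := AddSubgroup.card_eq_card_quotient_mul_card_addSubgroup (emap n m).ker
  rw [h1, h2] at h3
  have hg : 0 < Nat.gcd n m := Nat.gcd_pos_of_pos_left m hn
  have hq : 0 < n * m / Nat.gcd n m := Nat.div_pos (Nat.le_of_dvd (by positivity) (gcd_dvd_mul n m)) hg
  have h4 : n * m / Nat.gcd n m * Nat.gcd n m
      = n * m / Nat.gcd n m * Nat.card (AddMonoidHom.ker (emap n m)) := by
    rw [Nat.div_mul_cancel (gcd_dvd_mul n m)]; exact h3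
  exact (Nat.eq_of_mul_eq_mul_left hq h4).symm

lemma fiber_zmod (n m : ℕ) (c : ZMod (n*m)) :
    Nat.card {x : ZMod n × ZMod m | emap n m x = c}
      = if c ∈ AddSubgroup.zmultiples ((Nat.gcd n m : ℤ) : ZMod (n*m))
        then Nat.card (AddMonoidHom.ker (emap n m)) else 0 := by
  split_ifs with hc
  · rw [← emap_range] at hc
    obtain ⟨x₀, rfl⟩ := hc
    have hset : {x : ZMod n × ZMod m | emap n m x = emap n m x₀}
        = (fun k => x₀ + k) '' ((AddMonoidHom.ker (emap n m) : AddSubgroup _) : Set _) := by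
      ext x
      simp only [Set.mem_setOf_eq, Set.mem_image, SetLike.mem_coe, AddMonoidHom.mem_ker]
      constructor
      · intro hx
        exact ⟨x - x₀, by simp [map_sub, hx], by abel⟩
      · rintro ⟨k, hk, rfl⟩
        simp [map_add, hk]
    rw [Nat.card_coe_set_eq, hset,
      Set.ncard_image_of_injective _ (add_right_injective x₀),
      ← Nat.card_coe_set_eq]
    rfl
  · have hempty : {x : ZMod n × ZMod m | emap n m x = c} = ∅ := by
      ext x
      simp only [Set.mem_setOf_eq, Set.mem_empty_iff_false, iff_false]
      intro hx
      exact hc (by rw [← emap_range]; exact ⟨x, hx⟩)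
    rw [hempty]
    simp

lemma cast_mem_zmultiples_iff (N g : ℕ) (hg : g ∣ N) (t : ℤ) :
    ((t : ℤ) : ZMod N) ∈ AddSubgroup.zmultiples ((g : ℤ) : ZMod N) ↔ (g : ℤ) ∣ t := by
  constructor
  · rintro ⟨k, hk⟩
    simp only [zsmul_eq_mul] at hk
    have : ((k * g : ℤ) : ZMod N) = (t : ZMod N) := by exact_mod_cast hk
    rw [ZMod.intCast_eq_intCast_iff, Int.ModEq] at this
    have hdvd : (N : ℤ) ∣ t - k * g := Int.ModEq.dvd this
    have hgN : (g : ℤ) ∣ (N : ℤ) := Int.natCast_dvd_natCast.2 hg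
    have h2 : (g : ℤ) ∣ t - k * g := hgN.trans hdvd
    have h3 := dvd_add h2 (dvd_mul_left (g : ℤ) k)
    rwa [sub_add_cancel] at h3
  · rintro ⟨s, rfl⟩
    exact ⟨s, by simp only [zsmul_eq_mul]; push_cast; ring⟩

lemma fiber_card (n m : ℕ) (hn : 0 < n) (hm : 0 < m) (t : ℤ) :
    ((Finset.range n ×ˢ Finset.range m).filter
        (fun p => ((n * m : ℕ) : ℤ) ∣ (t + (p.1 : ℤ) * m - (p.2 : ℤ) * n))).card
      = if (Nat.gcd n m : ℤ) ∣ t then Nat.gcd n m else 0 := by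
  haveI : NeZero n := ⟨hn.ne'⟩
  haveI : NeZero m := ⟨hm.ne'⟩
  classical
  set c : ZMod (n*m) := ((-t : ℤ) : ZMod (n*m)) with hc
  have key : ∀ (u v : ℕ), (((n*m : ℕ) : ℤ) ∣ (t + (u:ℤ) * m - (v:ℤ) * n)) ↔
      emap n m ((u : ZMod n), (v : ZMod m)) = c := by
    intro u v
    have h0 : ((u : ZMod n), (v : ZMod m)) = (((u:ℤ) : ZMod n), ((v:ℤ) : ZMod m)) := by
      push_cast; rfl
    rw [h0, emap_apply, hc, ZMod.intCast_eq_intCast_iff, Int.modEq_iff_dvd]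
    rw [show -t - ((u:ℤ) * (m:ℤ) - (v:ℤ) * (n:ℤ)) = -(t + (u:ℤ) * (m:ℤ) - (v:ℤ) * (n:ℤ)) by
      ring, dvd_neg]
  have h1 : ((Finset.range n ×ˢ Finset.range m).filter
        (fun p => ((n * m : ℕ) : ℤ) ∣ (t + (p.1 : ℤ) * m - (p.2 : ℤ) * n))).card
      = Nat.card {x : ZMod n × ZMod m | emap n m x = c} := by
    rw [Nat.card_coe_set_eq, Set.ncard_eq_toFinset_card']
    apply Finset.card_bij (fun p _ => ((p.1 : ZMod n), (p.2 : ZMod m)))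
    · intro p hp
      simp only [Finset.mem_filter, Finset.mem_product, Finset.mem_range] at hp
      simp only [Set.mem_toFinset, Set.mem_setOf_eq]
      exact (key p.1 p.2).1 hp.2
    · intro p1 h1 p2 h2 heq
      simp only [Finset.mem_filter, Finset.mem_product, Finset.mem_range] at h1 h2
      have e1 : (p1.1 : ZMod n) = (p2.1 : ZMod n) := congrArg Prod.fst heq
      have e2 : (p1.2 : ZMod m) = (p2.2 : ZMod m) := congrArg Prod.snd heq
      have : p1.1 = p2.1 := by
        rw [← ZMod.val_cast_of_lt h1.1.1, ← ZMod.val_cast_of_lt h2.1.1, e1]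
      have : p1.2 = p2.2 := by
        rw [← ZMod.val_cast_of_lt h1.1.2, ← ZMod.val_cast_of_lt h2.1.2, e2]
      exact Prod.ext ‹p1.1 = p2.1› ‹p1.2 = p2.2›
    · intro x hx
      simp only [Set.mem_toFinset, Set.mem_setOf_eq] at hx
      refine ⟨(x.1.val, x.2.val), ?_, ?_⟩
      · simp only [Finset.mem_filter, Finset.mem_product, Finset.mem_range]
        refine ⟨⟨ZMod.val_lt x.1, ZMod.val_lt x.2⟩, ?_⟩
        rw [key]
        simp only [ZMod.natCast_val, ZMod.cast_id, Prod.mk.eta]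
        exact hx
      · simp only [ZMod.natCast_val, ZMod.cast_id, Prod.mk.eta]
  rw [h1, fiber_zmod, emap_ker_card n m hn hm]
  congr 1
  rw [hc, cast_mem_zmultiples_iff (n*m) (Nat.gcd n m) (gcd_dvd_mul n m) (-t), dvd_neg]

lemma card_dvd_Ico (g D : ℤ) (hg : 0 < g) (hgD : g ∣ D) :
    ((Finset.Ico (0:ℤ) D).filter (fun t => g ∣ t)).card = (D / g).toNat := by
  have himg : (Finset.Ico (0:ℤ) D).filter (fun t => g ∣ t)
      = (Finset.Ico (0:ℤ) (D/g)).image (fun j => g * j) := by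
    ext t
    simp only [Finset.mem_filter, Finset.mem_Ico, Finset.mem_image]
    constructor
    · rintro ⟨⟨h0, h1⟩, k, rfl⟩
      refine ⟨k, ⟨nonneg_of_mul_nonneg_right h0 hg, ?_⟩, rfl⟩
      rw [← Int.ediv_mul_cancel hgD, mul_comm (D/g) g] at h1
      exact lt_of_mul_lt_mul_left h1 hg.le
    · rintro ⟨j, ⟨h0, h1⟩, rfl⟩
      refine ⟨⟨mul_nonneg hg.le h0, ?_⟩, j, rfl⟩
      calc g * j < g * (D / g) := by exact mul_lt_mul_of_pos_left h1 hg
        _ = D := by rw [mul_comm]; exact Int.ediv_mul_cancel hgD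
  rw [himg, Finset.card_image_of_injective _ (mul_right_injective₀ hg.ne'), Int.card_Ico,
    sub_zero]

lemma circle_eq_iff (x y : ℝ) : ((x : UnitAddCircle) = (y : UnitAddCircle)) ↔ ∃ k : ℤ, y - x = k := by
  show (_ : AddCircle (1:ℝ)) = _ ↔ _
  rw [show ((x : AddCircle (1:ℝ)) = (y : AddCircle (1:ℝ))) ↔ -x + y ∈ AddSubgroup.zmultiples (1:ℝ)
    from QuotientAddGroup.eq]
  simp only [AddSubgroup.mem_zmultiples_iff, zsmul_eq_mul, mul_one, neg_add_eq_sub]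
  exact exists_congr fun k => eq_comm

set_option maxHeartbeats 2000000 in
lemma key_count (n m : ℕ) (a b : ℤ) (hn : 0 < n) (hm : 0 < m)
    (hD : 0 < a * m - b * n) :
    {p : ℝ × UnitAddCircle | p.1 ∈ Set.Ico (0 : ℝ) 1 ∧
        p.2 ∈ powerMap n a p.1 ∩ powerMap m b p.1}.ncard = (a * m - b * n).natAbs := by
  classical
  set D : ℤ := a * m - b * n with hDdef
  set g : ℕ := Nat.gcd n m with hgdef
  have hn' : ((n:ℝ)) ≠ 0 := by positivity
  have hm' : ((m:ℝ)) ≠ 0 := by positivity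
  have hDr : (0:ℝ) < (D:ℝ) := by exact_mod_cast hD
  have hgZ : (0:ℤ) < (g:ℤ) := by
    have := Nat.gcd_pos_of_pos_left m hn
    exact_mod_cast this
  have hgD : (g:ℤ) ∣ D := by
    refine dvd_sub ?_ ?_
    · exact Dvd.dvd.mul_left (Int.natCast_dvd_natCast.2 (Nat.gcd_dvd_right n m)) a
    · exact Dvd.dvd.mul_left (Int.natCast_dvd_natCast.2 (Nat.gcd_dvd_left n m)) b
  set B : Finset (ℤ × ℕ × ℕ) := (Finset.Ico (0:ℤ) D).biUnion (fun t =>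
    {t} ×ˢ ((Finset.range n ×ˢ Finset.range m).filter
      (fun p => ((n * m : ℕ) : ℤ) ∣ (t + (p.1 : ℤ) * m - (p.2 : ℤ) * n)))) with hBdef
  have hBmem : ∀ q : ℤ × ℕ × ℕ, q ∈ B ↔ (0 ≤ q.1 ∧ q.1 < D) ∧ q.2.1 < n ∧ q.2.2 < m ∧
      ((n * m : ℕ) : ℤ) ∣ (q.1 + (q.2.1 : ℤ) * m - (q.2.2 : ℤ) * n) := by
    intro q
    simp only [hBdef, Finset.mem_biUnion, Finset.mem_Ico, Finset.mem_product,
      Finset.mem_singleton, Finset.mem_filter, Finset.mem_range]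
    constructor
    · rintro ⟨t, ht, h1, ⟨h2, h3⟩⟩
      obtain rfl : q.1 = t := h1
      exact ⟨ht, h2.1, h2.2, h3⟩
    · rintro ⟨h1, h2, h3, h4⟩
      exact ⟨q.1, h1, rfl, ⟨h2, h3⟩, h4⟩
  set F : ℤ × ℕ × ℕ → ℝ × UnitAddCircle := fun q =>
    (((q.1 : ℝ) / (D : ℝ)),
      (↑(((a : ℝ) / n) * ((q.1 : ℝ) / (D : ℝ)) + (q.2.1 : ℝ) / n) : UnitAddCircle)) with hFdef
  have hbij : Set.BijOn F ↑B {p : ℝ × UnitAddCircle | p.1 ∈ Set.Ico (0 : ℝ) 1 ∧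
      p.2 ∈ powerMap n a p.1 ∩ powerMap m b p.1} := by
    refine ⟨?_, ?_, ?_⟩
    · rintro ⟨t, u, v⟩ hq
      rw [Finset.mem_coe, hBmem] at hq
      obtain ⟨⟨ht0, ht1⟩, hu, hv, w, hw⟩ := hq
      refine ⟨⟨div_nonneg (by exact_mod_cast ht0) hDr.le, ?_⟩, ⟨u, hu, rfl⟩, v, hv, ?_⟩
      · rw [div_lt_one hDr]; exact_mod_cast ht1
      · rw [circle_eq_iff]
        refine ⟨-w, ?_⟩
        have hwR : (t:ℝ) + u * m - v * n = (n * m) * w := by exact_mod_cast hw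
        have hDR : (D:ℝ) = a * m - b * n := by rw [hDdef]; push_cast; ring
        show (b:ℝ) / m * ((t:ℝ) / D) + (v:ℝ) / m - ((a:ℝ) / n * ((t:ℝ) / D) + (u:ℝ) / n)
          = ((-w : ℤ) : ℝ)
        push_cast
        field_simp
        linear_combination (-(D:ℝ)) * hwR + (t:ℝ) * hDR
    · rintro ⟨t, u, v⟩ hq ⟨t', u', v'⟩ hq' heq
      rw [Finset.mem_coe, hBmem] at hq hq'
      obtain ⟨⟨ht0, ht1⟩, hu, hv, hdvd⟩ := hq
      obtain ⟨⟨ht0', ht1'⟩, hu', hv', hdvd'⟩ := hq'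
      have h1 : ((t:ℝ))/(D:ℝ) = (t':ℝ)/(D:ℝ) := congrArg Prod.fst heq
      have htt : t = t' := by
        field_simp at h1; exact_mod_cast h1
      subst htt
      have h2 : (↑(((a:ℝ)/n) * ((t:ℝ)/(D:ℝ)) + (u:ℝ)/n) : UnitAddCircle)
          = ↑(((a:ℝ)/n) * ((t:ℝ)/(D:ℝ)) + (u':ℝ)/n) := congrArg Prod.snd heq
      rw [circle_eq_iff] at h2
      obtain ⟨k, hk⟩ := h2
      have hkn : ((u':ℕ):ℝ) - ((u:ℕ):ℝ) = (k:ℝ) * n := by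
        field_simp at hk
        have hnD : (n:ℝ) * (D:ℝ) ≠ 0 := mul_ne_zero hn' hDr.ne'
        apply mul_right_cancel₀ hnD
        linear_combination (n:ℝ) * hk
      have hu'R : ((u':ℕ):ℝ) < n := by exact_mod_cast hu'
      have huR : ((u:ℕ):ℝ) < n := by exact_mod_cast hu
      have hnR : (0:ℝ) < n := by exact_mod_cast hn
      have hk0 : k = 0 := by
        have c1 : (k:ℝ) * n < 1 * n := by
          have : ((u:ℕ):ℝ) ≥ 0 := by positivity
          nlinarith
        have c2 : (-1 : ℝ) * n < k * n := by
          have : ((u':ℕ):ℝ) ≥ 0 := by positivity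
          nlinarith
        have d1 : (k:ℝ) < 1 := lt_of_mul_lt_mul_right c1 hnR.le
        have d2 : (-1:ℝ) < k := lt_of_mul_lt_mul_right c2 hnR.le
        have e1 : k < 1 := by exact_mod_cast d1
        have e2 : -1 < k := by exact_mod_cast d2
        omega
      have huu : u = u' := by
        rw [hk0] at hkn
        push_cast at hkn
        have : ((u:ℕ):ℝ) = ((u':ℕ):ℝ) := by linarith
        exact_mod_cast this
      subst huu
      obtain ⟨w, hw⟩ := hdvd
      obtain ⟨w', hw'⟩ := hdvd'
      have hnz : ((n:ℕ):ℤ) ≠ 0 := by exact_mod_cast hn.ne'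
      have hvv : ((v':ℕ):ℤ) - ((v:ℕ):ℤ) = ((m:ℕ):ℤ) * (w - w') := by
        have step : (((v':ℕ):ℤ) - ((v:ℕ):ℤ)) * n = (((m:ℕ):ℤ) * (w - w')) * n := by
          push_cast at hw hw' ⊢
          linear_combination hw - hw'
        exact mul_right_cancel₀ hnz step
      have hmZ : (0:ℤ) < (m:ℤ) := by exact_mod_cast hm
      have habs : |((m:ℕ):ℤ) * (w - w')| < (m:ℤ) := by
        rw [← hvv, abs_lt]
        have b1 : ((v:ℕ):ℤ) < m := by exact_mod_cast hv
        have b2 : ((v':ℕ):ℤ) < m := by exact_mod_cast hv'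
        have b3 : (0:ℤ) ≤ ((v:ℕ):ℤ) := Int.natCast_nonneg v
        have b4 : (0:ℤ) ≤ ((v':ℕ):ℤ) := Int.natCast_nonneg v'
        omega
      rw [abs_mul, abs_of_pos hmZ] at habs
      have hwc : |w - w'| < 1 := by
        exact lt_of_mul_lt_mul_left
          (show ((m:ℕ):ℤ) * |w - w'| < ((m:ℕ):ℤ) * 1 by rw [mul_one]; exact habs) hmZ.le
      have hww : w = w' := by
        have := Int.abs_lt_one_iff.mp hwc
        omega
      have hvveq : v = v' := by
        rw [hww] at hvv
        simp at hvv
        omega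
      simp [hvveq]
    · rintro ⟨s, y⟩ hp
      obtain ⟨⟨hs0, hs1⟩, ⟨u, hu, hyu⟩, ⟨v, hv, hyv⟩⟩ := hp
      have hc : (↑(((a:ℝ)/n) * s + (u:ℝ)/n) : UnitAddCircle)
          = ↑(((b:ℝ)/m) * s + (v:ℝ)/m) := by rw [← hyu, ← hyv]
      rw [circle_eq_iff] at hc
      obtain ⟨k, hk⟩ := hc
      set t : ℤ := -k * (n * m) + (v:ℤ) * n - (u:ℤ) * m with htdef
      have hDR : (D:ℝ) = (a:ℝ) * m - (b:ℝ) * n := by rw [hDdef]; push_cast; ring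
      have hts : (D:ℝ) * s = (t:ℝ) := by
        have htR : (t:ℝ) = -(k:ℝ) * (n * m) + (v:ℝ) * n - (u:ℝ) * m := by
          rw [htdef]; push_cast; ring
        field_simp at hk
        rw [htR, hDR]
        linear_combination -hk
      refine ⟨(t, u, v), ?_, ?_⟩
      · rw [Finset.mem_coe, hBmem]
        refine ⟨⟨?_, ?_⟩, hu, hv, ⟨-k, by rw [htdef]; push_cast; ring⟩⟩
        · have h0 : (0:ℝ) ≤ (t:ℝ) := hts ▸ mul_nonneg hDr.le hs0
          exact_mod_cast h0
        · have h1 : (t:ℝ) < (D:ℝ) := by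
            rw [← hts]
            nlinarith
          exact_mod_cast h1
      · have hst : (t:ℝ) / (D:ℝ) = s := by rw [← hts]; field_simp
        have : F (t, u, v) = (((t:ℝ)/(D:ℝ)),
            (↑(((a:ℝ)/n) * ((t:ℝ)/(D:ℝ)) + (u:ℝ)/n) : UnitAddCircle)) := rfl
        rw [this, hst, Prod.mk.injEq]
        exact ⟨rfl, hyu.symm⟩
  have hcard1 : {p : ℝ × UnitAddCircle | p.1 ∈ Set.Ico (0 : ℝ) 1 ∧
      p.2 ∈ powerMap n a p.1 ∩ powerMap m b p.1}.ncard = B.card := by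
    rw [← hbij.image_eq, Set.ncard_image_of_injOn hbij.injOn, Set.ncard_coe_finset]
  rw [hcard1]
  have hdisj : ∀ t1 ∈ Finset.Ico (0:ℤ) D, ∀ t2 ∈ Finset.Ico (0:ℤ) D, t1 ≠ t2 →
      Disjoint ({t1} ×ˢ ((Finset.range n ×ˢ Finset.range m).filter
        (fun p => ((n * m : ℕ) : ℤ) ∣ (t1 + (p.1 : ℤ) * m - (p.2 : ℤ) * n))))
        ({t2} ×ˢ ((Finset.range n ×ˢ Finset.range m).filter
        (fun p => ((n * m : ℕ) : ℤ) ∣ (t2 + (p.1 : ℤ) * m - (p.2 : ℤ) * n)))) := by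
    intro t1 _ t2 _ hne
    rw [Finset.disjoint_left]
    intro q hq1 hq2
    rw [Finset.mem_product, Finset.mem_singleton] at hq1 hq2
    exact hne (hq1.1 ▸ hq2.1)
  rw [hBdef, Finset.card_biUnion hdisj]
  have hfib : ∀ t ∈ Finset.Ico (0:ℤ) D,
      ({t} ×ˢ ((Finset.range n ×ˢ Finset.range m).filter
        (fun p => ((n * m : ℕ) : ℤ) ∣ (t + (p.1 : ℤ) * m - (p.2 : ℤ) * n)))).card
      = if (g:ℤ) ∣ t then g else 0 := by
    intro t _
    rw [Finset.card_product, Finset.card_singleton, one_mul, fiber_card n m hn hm t]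
  rw [Finset.sum_congr rfl hfib, ← Finset.sum_filter, Finset.sum_const, smul_eq_mul,
    card_dvd_Ico (g:ℤ) D hgZ hgD]
  have h5 : (((D / (g:ℤ)).toNat * g : ℕ) : ℤ) = D := by
    push_cast [Int.toNat_of_nonneg (Int.ediv_nonneg hD.le hgZ.le)]
    exact Int.ediv_mul_cancel hgD
  omega

theorem stmt_7 (n m : ℕ) (a b : ℤ) (hn : 0 < n) (hm : 0 < m)
    (h : a * m ≠ b * n) :
    {p : ℝ × UnitAddCircle | p.1 ∈ Set.Ico (0 : ℝ) 1 ∧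
        p.2 ∈ powerMap n a p.1 ∩ powerMap m b p.1}.ncard = (a * m - b * n).natAbs := by
  rcases h.lt_or_gt with h1 | h1
  · have hD' : 0 < b * n - a * m := by linarith
    have key := key_count m n b a hm hn hD'
    have hset : {p : ℝ × UnitAddCircle | p.1 ∈ Set.Ico (0 : ℝ) 1 ∧
        p.2 ∈ powerMap m b p.1 ∩ powerMap n a p.1}
        = {p : ℝ × UnitAddCircle | p.1 ∈ Set.Ico (0 : ℝ) 1 ∧
        p.2 ∈ powerMap n a p.1 ∩ powerMap m b p.1} := by
      ext p
      simp only [Set.mem_setOf_eq]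
      rw [Set.inter_comm]
    rw [hset] at key
    rw [key, ← Int.natAbs_neg, neg_sub]
  · exact key_count n m a b hn hm (by linarith)
end

section
/- Let n be a positive integer and a an integer. The graph Γ(φ_{n,a}) = {(x,y) ∈ (ℝ/ℤ)² : y ∈ φ_{n,a}(x)} of the n-valued power map of degree a (viewed as a subset of the torus) is path-connected if and only if gcd(n, |a|) = 1. -/
private lemma coe_int_zero (k : ℤ) : ((k : ℝ) : UnitAddCircle) = 0 := by
  rw [AddCircle.coe_eq_zero_iff]
  exact ⟨k, by simp⟩

private lemma coe_eq_coe_of_sub {x y : ℝ} (k : ℤ) (h : x = y + k) :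
    ((x : ℝ) : UnitAddCircle) = (y : ℝ) := by
  rw [h, AddCircle.coe_add, coe_int_zero, add_zero]

theorem stmt_8 (n : ℕ) (a : ℤ) (hn : 0 < n) :
    IsPathConnected {p : UnitAddCircle × UnitAddCircle |
        ∃ s : ℝ, s ∈ Set.Ico (0 : ℝ) 1 ∧ p.1 = ↑s ∧ p.2 ∈ powerMap n a s} ↔
      Nat.gcd n a.natAbs = 1 := by
  have hnR : (n : ℝ) ≠ 0 := Nat.cast_ne_zero.mpr hn.ne'
  constructor
  · -- path-connected → gcd = 1
    intro hpc
    by_contra hgcd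
    set d := Nat.gcd n a.natAbs with hd
    have hdn : d ∣ n := Nat.gcd_dvd_left _ _
    have hda : (d : ℤ) ∣ a :=
      Int.dvd_natAbs.mp (Int.natCast_dvd_natCast.mpr (Nat.gcd_dvd_right n a.natAbs))
    have hdpos : 0 < d := Nat.gcd_pos_of_pos_left _ hn
    have hd2 : 2 ≤ d := by omega
    have hn2 : 2 ≤ n := le_trans hd2 (Nat.le_of_dvd hn hdn)
    obtain ⟨m, hm⟩ := hdn
    obtain ⟨b, hb⟩ := hda
    have hdR : (d : ℝ) ≠ 0 := Nat.cast_ne_zero.mpr hdpos.ne'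
    have hmpos : 0 < m := Nat.pos_of_ne_zero (fun h => by subst h; simp at hm; omega)
    have hmR : (m : ℝ) ≠ 0 := Nat.cast_ne_zero.mpr hmpos.ne'
    have hnRm : (n : ℝ) = (d : ℝ) * (m : ℝ) := by exact_mod_cast congrArg (fun z : ℕ => (z : ℝ)) hm
    have haR : (a : ℝ) = (d : ℝ) * (b : ℝ) := by exact_mod_cast congrArg (fun z : ℤ => (z : ℝ)) hb
    set g : UnitAddCircle × UnitAddCircle → UnitAddCircle :=
      fun p => (m : ℤ) • p.2 - b • p.1 with hg
    have hgcont : Continuous g :=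
      ((continuous_zsmul (m : ℤ)).comp continuous_snd).sub
        ((continuous_zsmul b).comp continuous_fst)
    have key : ∀ (s : ℝ) (u : ℕ),
        g ((↑s : UnitAddCircle), (↑(((a : ℝ) / n) * s + (u : ℝ) / n) : UnitAddCircle)) =
          ↑((u : ℝ) / d) := by
      intro s u
      show (m : ℤ) • (↑(((a : ℝ) / n) * s + (u : ℝ) / n) : UnitAddCircle) - b • (↑s : UnitAddCircle) = _
      rw [← AddCircle.coe_zsmul, ← AddCircle.coe_zsmul, ← AddCircle.coe_sub]
      congr 1
      simp only [zsmul_eq_mul, Int.cast_natCast]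
      rw [hnRm, haR]
      field_simp
      ring
    -- two points of the set
    have hp0 : ((0 : UnitAddCircle), (0 : UnitAddCircle)) ∈
        {p : UnitAddCircle × UnitAddCircle |
          ∃ s : ℝ, s ∈ Set.Ico (0 : ℝ) 1 ∧ p.1 = ↑s ∧ p.2 ∈ powerMap n a s} := by
      refine ⟨0, ⟨le_refl _, zero_lt_one⟩, ?_, 0, hn, ?_⟩ <;> norm_num
    have hp1 : ((0 : UnitAddCircle), (↑((1 : ℝ) / n) : UnitAddCircle)) ∈
        {p : UnitAddCircle × UnitAddCircle |
          ∃ s : ℝ, s ∈ Set.Ico (0 : ℝ) 1 ∧ p.1 = ↑s ∧ p.2 ∈ powerMap n a s} := by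
      refine ⟨0, ⟨le_refl _, zero_lt_one⟩, by norm_num, 1, by omega, by norm_num⟩
    obtain ⟨γp, hγp⟩ := hpc.joinedIn _ hp0 _ hp1
    set f : unitInterval → UnitAddCircle := fun t => g (γp t) with hf
    have hfc : Continuous f := hgcont.comp γp.continuous
    set F : Set UnitAddCircle :=
      Set.range (fun k : Fin d => (↑((k : ℝ) / d) : UnitAddCircle)) with hF
    have hFfin : F.Finite := Set.finite_range _
    have hmemF : ∀ t, f t ∈ F := by
      intro t
      obtain ⟨s, hs, h1, u, hu, h2⟩ := hγp t
      have hpt : γp t = ((↑s : UnitAddCircle), (↑(((a : ℝ) / n) * s + (u : ℝ) / n) : UnitAddCircle)) :=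
        Prod.ext h1 h2
      have : f t = ↑((u : ℝ) / d) := by rw [hf]; simp only; rw [hpt, key]
      rw [this]
      refine ⟨⟨u % d, Nat.mod_lt _ hdpos⟩, ?_⟩
      simp only
      refine (coe_eq_coe_of_sub ((u / d : ℕ) : ℤ) ?_).symm
      have hsplit : (u : ℝ) = (d : ℝ) * ((u / d : ℕ) : ℝ) + ((u % d : ℕ) : ℝ) := by
        exact_mod_cast congrArg (fun z : ℕ => (z : ℝ)) (Nat.div_add_mod u d).symm
      rw [Int.cast_natCast, hsplit]
      field_simp
      ring
    have hf0 : f 0 = 0 := by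
      rw [hf]; simp only [γp.source]
      show (m : ℤ) • (0 : UnitAddCircle) - b • (0 : UnitAddCircle) = 0
      simp
    have hf1 : f 1 = ↑((1 : ℝ) / d) := by
      rw [hf]; simp only [γp.target]
      show (m : ℤ) • (↑((1 : ℝ) / n) : UnitAddCircle) - b • (0 : UnitAddCircle) = _
      rw [smul_zero, sub_zero, ← AddCircle.coe_zsmul]
      congr 1
      simp only [zsmul_eq_mul, Int.cast_natCast]
      rw [hnRm]
      field_simp
    have hne : (↑((1 : ℝ) / d) : UnitAddCircle) ≠ 0 := by
      intro hzero
      rw [AddCircle.coe_eq_zero_iff] at hzero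
      obtain ⟨k, hk⟩ := hzero
      have hkR : (k : ℝ) = 1 / d := by simpa using hk
      have h0 : (0 : ℝ) < 1 / d := by positivity
      have h1 : (1 : ℝ) / d < 1 := by
        rw [div_lt_one (by positivity)]
        exact_mod_cast hd2.trans_lt' one_lt_two
      rw [← hkR] at h0 h1
      have hk0 : (0 : ℤ) < k := by exact_mod_cast h0
      have hk1 : k < 1 := by exact_mod_cast h1
      omega
    -- clopen argument
    set C : Set unitInterval := f ⁻¹' {0} with hC
    have hCclosed : IsClosed C := isClosed_singleton.preimage hfc
    have hCopen : IsOpen C := by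
      have : C = f ⁻¹' (F \ {0})ᶜ := by
        ext t
        simp only [hC, Set.mem_preimage, Set.mem_singleton_iff, Set.mem_compl_iff,
          Set.mem_diff]
        have := hmemF t
        tauto
      rw [this]
      exact (hFfin.diff.isClosed.isOpen_compl).preimage hfc
    have h0C : (0 : unitInterval) ∈ C := hf0
    have h1C : (1 : unitInterval) ∉ C := by
      simp only [hC, Set.mem_preimage, Set.mem_singleton_iff, hf1]
      exact hne
    rcases isClopen_iff.mp ⟨hCclosed, hCopen⟩ with h | h
    · rw [h] at h0C; exact h0C
    · rw [h] at h1C; exact h1C (Set.mem_univ _)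
  · -- gcd = 1 → path-connected
    intro h
    have hco : IsCoprime (n : ℤ) a := by
      rw [Int.isCoprime_iff_gcd_eq_one]
      simpa [Int.gcd] using h
    obtain ⟨x, y, hxy⟩ := hco
    set γ : ℝ → UnitAddCircle × UnitAddCircle :=
      fun t => ((↑((n : ℝ) * t) : UnitAddCircle), (↑((a : ℝ) * t) : UnitAddCircle)) with hγ
    have hγc : Continuous γ := by
      apply Continuous.prodMk
      · exact (AddCircle.continuous_mk' 1).comp (continuous_const.mul continuous_id)
      · exact (AddCircle.continuous_mk' 1).comp (continuous_const.mul continuous_id)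
    have hset : {p : UnitAddCircle × UnitAddCircle |
        ∃ s : ℝ, s ∈ Set.Ico (0 : ℝ) 1 ∧ p.1 = ↑s ∧ p.2 ∈ powerMap n a s} = Set.range γ := by
      ext p
      constructor
      · rintro ⟨s, hs, hp1, u, hu, hp2⟩
        refine ⟨(s + (y * u : ℤ)) / n, ?_⟩
        have hk : (a : ℤ) * (y * u) = u - n * (x * u) := by linear_combination (u : ℤ) * hxy
        have h1 : (n : ℝ) * ((s + (y * u : ℤ)) / n) = s + ((y * u : ℤ) : ℝ) := by
          field_simp
        have h2 : (a : ℝ) * ((s + (y * u : ℤ)) / n) =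
            ((a : ℝ) / n) * s + (u : ℝ) / n + ((-(x * u) : ℤ) : ℝ) := by
          have hkR : (a : ℝ) * ((y * u : ℤ) : ℝ) = (u : ℝ) - (n : ℝ) * ((x * u : ℤ) : ℝ) := by
            exact_mod_cast congrArg (fun z : ℤ => (z : ℝ)) hk
          field_simp
          push_cast at hkR ⊢
          linear_combination hkR
        have e1 : (↑((n : ℝ) * ((s + (y * u : ℤ)) / n)) : UnitAddCircle) = ↑s :=
          coe_eq_coe_of_sub (y * u) h1
        have e2 : (↑((a : ℝ) * ((s + (y * u : ℤ)) / n)) : UnitAddCircle) =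
            ↑(((a : ℝ) / n) * s + (u : ℝ) / n) :=
          coe_eq_coe_of_sub (-(x * u)) h2
        ext
        · simp only [hγ]
          rw [e1, ← hp1]
        · simp only [hγ]
          rw [e2, ← hp2]
      · rintro ⟨t, rfl⟩
        set s := Int.fract ((n : ℝ) * t) with hsdef
        set K := ⌊(n : ℝ) * t⌋ with hK
        refine ⟨s, ⟨Int.fract_nonneg _, Int.fract_lt_one _⟩, ?_, ?_⟩
        · show (↑((n : ℝ) * t) : UnitAddCircle) = ↑s
          refine coe_eq_coe_of_sub K ?_
          rw [hsdef, hK]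
          linarith [Int.fract_add_floor ((n : ℝ) * t)]
        · set u : ℕ := ((a * K) % n).toNat with hu
          have hmod_nonneg : 0 ≤ (a * K) % n := Int.emod_nonneg _ (by exact_mod_cast hn.ne')
          have hmod_lt : (a * K) % n < n := Int.emod_lt_of_pos _ (by exact_mod_cast hn)
          refine ⟨u, ?_, ?_⟩
          · omega
          · have huR : ((u : ℕ) : ℝ) = (((a * K) % n : ℤ) : ℝ) := by
              rw [hu]; exact_mod_cast Int.toNat_of_nonneg hmod_nonneg
            have hdm : a * K = n * ((a * K) / n) + (a * K) % n := (Int.mul_ediv_add_emod _ _).symm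
            have hnt : (n : ℝ) * t = s + (K : ℝ) := by rw [hsdef, Int.fract]; ring
            have : (a : ℝ) * t = ((a : ℝ) / n) * s + (u : ℝ) / n + (((a * K) / n : ℤ) : ℝ) := by
              have hdmR : (a : ℝ) * (K : ℝ) =
                  (n : ℝ) * (((a * K) / n : ℤ) : ℝ) + (((a * K) % n : ℤ) : ℝ) := by
                exact_mod_cast congrArg (fun z : ℤ => (z : ℝ)) hdm
              rw [huR]
              field_simp
              linear_combination (a : ℝ) * hnt + hdmR
            show (↑((a : ℝ) * t) : UnitAddCircle) = _
            exact coe_eq_coe_of_sub ((a * K) / n) this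
    rw [hset]
    exact isPathConnected_range hγc
end

section
/- Let n be a positive integer and a an integer with gcd(n,|a|) = 1, and let l : [0,1] → (ℝ/ℤ)² be given by l(t) = (nt mod 1, at mod 1). Then the image of l equals the graph {(x,y) : y ∈ φ_{n,a}(x)} of the power map φ_{n,a}. -/
lemma uc_eq {x y : ℝ} (k : ℤ) (h : x - y = k) : (↑x : UnitAddCircle) = ↑y := by
  have hm : x - y ∈ AddSubgroup.zmultiples (1 : ℝ) := ⟨k, by simp [h]⟩
  exact (QuotientAddGroup.eq_iff_sub_mem).2 hm

theorem stmt_9 (n : ℕ) (a : ℤ) (hn : 0 < n) (hgcd : Nat.gcd n a.natAbs = 1) :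
    (fun t : ℝ => (((↑((n : ℝ) * t) : UnitAddCircle), (↑((a : ℝ) * t) : UnitAddCircle))))
        '' Set.Icc (0 : ℝ) 1 =
      {p : UnitAddCircle × UnitAddCircle |
        ∃ s : ℝ, s ∈ Set.Ico (0 : ℝ) 1 ∧ p.1 = ↑s ∧ p.2 ∈ powerMap n a s} := by
  have hn0 : (n : ℝ) ≠ 0 := Nat.cast_ne_zero.mpr hn.ne'
  have hnz : (n : ℤ) ≠ 0 := Int.natCast_ne_zero.mpr hn.ne'
  ext p
  constructor
  · rintro ⟨t, ht, rfl⟩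
    set m : ℤ := ⌊(n : ℝ) * t⌋ with hm
    set s : ℝ := Int.fract ((n : ℝ) * t) with hs
    have hsm : (n : ℝ) * t = m + s := by
      rw [hs, Int.fract]; ring
    refine ⟨s, ⟨Int.fract_nonneg _, Int.fract_lt_one _⟩, ?_, ?_⟩
    · exact uc_eq m (by rw [hsm]; ring)
    · refine ⟨((a * m) % n).toNat, ?_, ?_⟩
      · have h1 : (a * m) % n < n := Int.emod_lt_of_pos _ (by exact_mod_cast hn)
        have h2 : 0 ≤ (a * m) % n := Int.emod_nonneg _ hnz
        omega
      · symm
        refine uc_eq (-(a * m / n)) ?_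
        have h2 : 0 ≤ (a * m) % n := Int.emod_nonneg _ hnz
        have hcast : ((((a * m) % n).toNat : ℕ) : ℝ) = (((a * m) % n : ℤ) : ℝ) := by
          exact_mod_cast congrArg (Int.cast : ℤ → ℝ) (Int.toNat_of_nonneg h2)
        have hemod : ((a * m) % n : ℤ) = a * m - n * (a * m / n) := by
          rw [Int.emod_def]
        have ht' : t = (m + s) / n := by
          field_simp at hsm ⊢; linarith [hsm]
        rw [hcast, ht']
        push_cast [hemod]
        field_simp
        ring
  · rintro ⟨s, ⟨hs0, hs1⟩, h1, u, hu, h2⟩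
    haveI : NeZero n := ⟨hn.ne'⟩
    have hunit : IsUnit (a : ZMod n) := by
      have h0 : IsUnit ((a.natAbs : ℕ) : ZMod n) :=
        (ZMod.isUnit_iff_coprime _ _).2 (Nat.coprime_comm.mp hgcd)
      rcases Int.natAbs_eq a with h | h
      · rw [h, Int.cast_natCast]; exact h0
      · rw [h, Int.cast_neg, Int.cast_natCast]; exact h0.neg
    obtain ⟨c, hc⟩ : ∃ c : ZMod n, (a : ZMod n) * c = 1 := by
      obtain ⟨v, hv⟩ := hunit
      exact ⟨↑v⁻¹, by rw [← hv, Units.mul_inv]⟩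
    set b : ℕ := (c * (u : ZMod n)).val with hb
    have hbn : b < n := ZMod.val_lt _
    have hab : ((a * b - u : ℤ) : ZMod n) = 0 := by
      have hb' : ((b : ℕ) : ZMod n) = c * u := by
        rw [hb, ZMod.natCast_val, ZMod.cast_id]
      push_cast
      rw [hb', sub_eq_zero, ← mul_assoc, hc, one_mul]
    have hdvd : (n : ℤ) ∣ (a * b - u : ℤ) := (ZMod.intCast_zmod_eq_zero_iff_dvd _ _).1 hab
    obtain ⟨k, hk⟩ := hdvd
    set t : ℝ := (s + b) / n with htdef
    have htmem : t ∈ Set.Icc (0 : ℝ) 1 := by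
      constructor
      · apply div_nonneg (by positivity) (by positivity)
      · rw [div_le_one (by positivity)]
        have : (b : ℝ) + 1 ≤ n := by exact_mod_cast hbn
        linarith
    refine ⟨t, htmem, ?_⟩
    simp only [Prod.ext_iff]
    constructor
    · rw [h1]
      refine uc_eq b ?_
      rw [htdef]; field_simp; simp
    · rw [h2]
      refine uc_eq k ?_
      rw [htdef]
      have hk' : ((a : ℝ) * b - u) = n * k := by exact_mod_cast congrArg (Int.cast : ℤ → ℝ) hk
      field_simp
      nlinarith [hk']
end

section
/- Let n, m be positive integers and a, b integers with am ≠ bn. Consider the two loops l₁(t) = (nt, at) and l₂(t) = (mt, bt) from ℝ/ℤ to the torus (ℝ/ℤ)², and assume gcd(n,|a|) = 1 and gcd(m,|b|) = 1. Then the number of points in the intersection of the images of l₁ and l₂ is exactly |am - bn|. -/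
private lemma torsion_eq_range (d : ℕ) [NeZero d] :
    {t : UnitAddCircle | (d : ℤ) • t = 0} =
      Set.range (ZMod.toAddCircle : ZMod d → UnitAddCircle) := by
  ext t
  simp only [Set.mem_setOf_eq, Set.mem_range]
  constructor
  · intro ht
    induction t using QuotientAddGroup.induction_on with
    | H x =>
      have hx : ((((d : ℤ) • x : ℝ)) : UnitAddCircle) = 0 := by
        rw [AddCircle.coe_zsmul]; exact ht
      rw [AddCircle.coe_eq_zero_iff] at hx
      obtain ⟨k, hk⟩ := hx
      refine ⟨(k : ZMod d), ?_⟩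
      rw [ZMod.toAddCircle_intCast]
      have hd : (d : ℝ) ≠ 0 := Nat.cast_ne_zero.mpr (NeZero.ne d)
      have hk' : (k : ℝ) = d * x := by simpa [zsmul_eq_mul, eq_comm] using hk.symm
      congr 1
      field_simp [hk']
      exact hk'
  · rintro ⟨j, rfl⟩
    rw [← map_zsmul]
    simp [show ((d:ℤ) • j : ZMod d) = 0 by simp [ZMod.intCast_zmod_eq_zero_iff_dvd]]

private lemma natAbs_zsmul_eq_zero {M : Type*} [SubtractionMonoid M] (z : ℤ) (t : M) :
    ((z.natAbs : ℤ)) • t = 0 ↔ z • t = 0 := by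
  rcases Int.natAbs_eq z with h | h
  · rw [← h]
  · rw [show ((z.natAbs : ℤ)) = -z by omega, neg_zsmul, neg_eq_zero]

theorem stmt_11 (n m : ℕ) (a b : ℤ) (hn : 0 < n) (hm : 0 < m)
    (h : a * m ≠ b * n)
    (hna : Nat.gcd n a.natAbs = 1) (hmb : Nat.gcd m b.natAbs = 1) :
    (Set.range (fun t : UnitAddCircle => ((n : ℤ) • t, a • t)) ∩
      Set.range (fun t : UnitAddCircle => ((m : ℤ) • t, b • t))).ncard =
        (a * m - b * n).natAbs := by
  set d : ℕ := (a * m - b * n).natAbs with hd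
  have hdz : a * m - b * n ≠ 0 := sub_ne_zero.mpr h
  haveI : NeZero d := ⟨Int.natAbs_ne_zero.mpr hdz⟩
  obtain ⟨u, v, huv⟩ : ∃ u v : ℤ, u * n + v * a = 1 := by
    have : IsCoprime (n : ℤ) a := by
      rw [Int.isCoprime_iff_gcd_eq_one, Int.gcd]
      simpa using hna
    obtain ⟨u, v, huv⟩ := this
    exact ⟨u, v, by linarith [huv]⟩
  obtain ⟨p, q, hpq⟩ : ∃ p q : ℤ, p * m + q * b = 1 := by
    have : IsCoprime (m : ℤ) b := by
      rw [Int.isCoprime_iff_gcd_eq_one, Int.gcd]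
      simpa using hmb
    obtain ⟨p, q, hpq⟩ := this
    exact ⟨p, q, by linarith [hpq]⟩
  -- l₁ is injective
  have hinj : Function.Injective (fun t : UnitAddCircle => ((n : ℤ) • t, a • t)) := by
    intro t t' ht
    have h1 : (n : ℤ) • t = (n : ℤ) • t' := congrArg Prod.fst ht
    have h2 : a • t = a • t' := congrArg Prod.snd ht
    calc t = (u * n + v * a) • t := by rw [huv, one_smul]
      _ = u • ((n:ℤ) • t) + v • (a • t) := by rw [add_smul, mul_smul, mul_smul]
      _ = u • ((n:ℤ) • t') + v • (a • t') := by rw [h1, h2]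
      _ = (u * n + v * a) • t' := by rw [add_smul, mul_smul, mul_smul]
      _ = t' := by rw [huv, one_smul]
  -- the intersection is the image of the d-torsion under l₁
  have hset : (Set.range (fun t : UnitAddCircle => ((n : ℤ) • t, a • t)) ∩
      Set.range (fun t : UnitAddCircle => ((m : ℤ) • t, b • t))) =
      (fun t : UnitAddCircle => ((n : ℤ) • t, a • t)) '' {t | (d : ℤ) • t = 0} := by
    ext x
    constructor
    · rintro ⟨⟨t, rfl⟩, ⟨s, hs⟩⟩
      have h1 : (m : ℤ) • s = (n : ℤ) • t := congrArg Prod.fst hs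
      have h2 : b • s = a • t := congrArg Prod.snd hs
      refine ⟨t, ?_, rfl⟩
      have key : (a * m - b * n) • t = 0 := by
        have : (a * m) • t = (b * n) • t := by
          calc (a * m) • t = a • ((m:ℤ) • t) := by rw [mul_smul]
            _ = m • (a • t) := smul_comm _ _ _
            _ = m • (b • s) := by rw [h2]
            _ = b • ((m:ℤ) • s) := smul_comm _ _ _
            _ = b • ((n:ℤ) • t) := by rw [h1]
            _ = (b * n) • t := by rw [mul_smul]
        rw [sub_smul, this, sub_self]
      show ((d : ℕ) : ℤ) • t = 0
      rw [hd, natAbs_zsmul_eq_zero]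
      exact key
    · rintro ⟨t, ht, rfl⟩
      have htd : (a * m - b * n) • t = 0 := by
        rw [← natAbs_zsmul_eq_zero, ← hd]
        exact ht
      refine ⟨⟨t, rfl⟩, ⟨(p * n + q * a) • t, ?_⟩⟩
      simp only [Prod.mk.injEq]
      constructor
      · have key : (m : ℤ) • ((p * n + q * a) • t) - (n : ℤ) • t
            = (q * (a * m - b * n)) • t := by
          rw [← mul_smul, ← sub_smul]
          congr 1
          linear_combination (n : ℤ) * hpq
        rw [← sub_eq_zero, key, mul_smul, htd, smul_zero]
      · have key : b • ((p * n + q * a) • t) - a • t = (-(p * (a * m - b * n))) • t := by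
          rw [← mul_smul, ← sub_smul]
          congr 1
          linear_combination (a : ℤ) * hpq
        rw [← sub_eq_zero, key, neg_smul, mul_smul, htd, smul_zero, neg_zero]
  rw [hset, Set.ncard_image_of_injective _ hinj, torsion_eq_range d,
    ← Nat.card_coe_set_eq, Nat.card_range_of_injective (ZMod.toAddCircle_injective d),
    Nat.card_zmod]
end

section
/- Let n, m be positive integers with w = gcd(n,m) > 1, write n = w·n₀ and m = w·m₀, and let a, b be integers with am ≠ bn. Define the restricted ('bottom block') maps φ̄_{n,a}(s) = φ_{n,a}(s) ∩ [0, 1/w) and φ̄_{m,b}(s) = φ_{m,b}(s) ∩ [0, 1/w). Then the set of s in [0,1) with φ̄_{n,a}(s) ∩ φ̄_{m,b}(s) ≠ ∅ is exactly {j·w/|am-bn| : j = 0, 1, ..., |am-bn|/w - 1}, and has cardinality |am - bn| / w. -/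
/-- The bottom block of the power map: values restricted to `[0, 1/w)`. -/
noncomputable def bottomBlock (w n : ℕ) (a : ℤ) (s : ℝ) : Set UnitAddCircle :=
  powerMap n a s ∩ ((fun r : ℝ => (↑r : UnitAddCircle)) '' Set.Ico (0 : ℝ) (1 / w))

lemma coe_eq_iff (x y : ℝ) : (↑x : UnitAddCircle) = ↑y ↔ ∃ z : ℤ, x - y = z := by
  rw [QuotientAddGroup.eq_iff_sub_mem, AddSubgroup.mem_zmultiples_iff]
  constructor
  · rintro ⟨k, hk⟩; exact ⟨k, by simpa using hk.symm⟩
  · rintro ⟨z, hz⟩; exact ⟨z, by simpa using hz.symm⟩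

lemma bb_mem (w n n₀ : ℕ) (a : ℤ) (hn : 0 < n) (hn0 : n = w * n₀)
    (s : ℝ) (y : UnitAddCircle) :
    y ∈ bottomBlock w n a s ↔
      ∃ v : ℕ, v < n₀ ∧ y = ↑((Int.fract (a * s) + v) / n) := by
  have hn₀ : 0 < n₀ := by
    rcases Nat.eq_zero_or_pos n₀ with h0 | h0
    · subst h0; omega
    · exact h0
  have hnR : (0:ℝ) < n := by exact_mod_cast hn
  have hwpos : 0 < w := by
    rcases Nat.eq_zero_or_pos w with h0 | h0
    · subst h0; omega
    · exact h0
  have hwR : (0:ℝ) < w := by exact_mod_cast hwpos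
  have hnw : (n:ℝ) = (w:ℝ) * (n₀:ℝ) := by exact_mod_cast congrArg (Nat.cast (R := ℝ)) hn0
  have hblock : (1:ℝ) / w = (n₀:ℝ) / n := by
    rw [hnw]; field_simp
  have hfr0 : 0 ≤ Int.fract ((a:ℝ) * s) := Int.fract_nonneg _
  have hfr1 : Int.fract ((a:ℝ) * s) < 1 := Int.fract_lt_one _
  have hfr : Int.fract ((a:ℝ) * s) = (a:ℝ) * s - ⌊(a:ℝ) * s⌋ := (Int.self_sub_floor _).symm
  constructor
  · rintro ⟨⟨u, hu, hyu⟩, ⟨r, hr, hyr⟩⟩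
    have heq : ((((a : ℝ) / n) * s + u / n : ℝ) : UnitAddCircle) = ↑r := by
      rw [← hyu]; exact hyr.symm
    rw [coe_eq_iff] at heq
    obtain ⟨z, hz⟩ := heq
    set V : ℤ := ⌊(a:ℝ) * s⌋ + u - z * n with hV
    have hrV : r = (Int.fract ((a:ℝ) * s) + (V:ℝ)) / n := by
      push_cast [hV]
      field_simp at hz ⊢
      linarith [hz]
    rw [hblock] at hr
    have h1 : 0 ≤ Int.fract ((a:ℝ) * s) + (V:ℝ) := by
      have h := hr.1; rw [hrV, le_div_iff₀ hnR] at h; simpa using h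
    have h2 : Int.fract ((a:ℝ) * s) + (V:ℝ) < (n₀:ℝ) := by
      have h := hr.2; rw [hrV, div_lt_div_iff₀ hnR hnR] at h
      exact lt_of_mul_lt_mul_right h hnR.le
    have hV0 : 0 ≤ V := by
      by_contra hc
      push_neg at hc
      have : (V:ℝ) ≤ -1 := by exact_mod_cast (by omega : V ≤ (-1:ℤ))
      linarith
    have hVn : V < (n₀:ℤ) := by
      have : (V:ℝ) < (n₀:ℝ) := by linarith
      exact_mod_cast this
    refine ⟨V.toNat, by omega, ?_⟩
    have hVt : ((V.toNat : ℕ) : ℝ) = (V:ℝ) := by exact_mod_cast Int.toNat_of_nonneg hV0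
    rw [hyu, hVt, ← hrV, coe_eq_iff]
    exact ⟨z, hz⟩
  · rintro ⟨v, hv, hy⟩
    have hmem : (Int.fract ((a:ℝ) * s) + v) / n ∈ Set.Ico (0:ℝ) (1 / w) := by
      constructor
      · positivity
      · rw [hblock, div_lt_div_iff₀ hnR hnR]
        have : (v:ℝ) ≤ (n₀:ℝ) - 1 := by
          have : (v:ℝ) + 1 ≤ n₀ := by exact_mod_cast hv
          linarith
        nlinarith
    refine ⟨?_, ⟨_, hmem, hy.symm⟩⟩
    set u : ℤ := ((v:ℤ) - ⌊(a:ℝ) * s⌋) % n with hu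
    have hn' : (0:ℤ) < n := by exact_mod_cast hn
    have hu0 : 0 ≤ u := Int.emod_nonneg _ (by omega)
    have hun : u < n := Int.emod_lt_of_pos _ hn'
    refine ⟨u.toNat, by omega, ?_⟩
    rw [hy, coe_eq_iff]
    have hdvd : (n:ℤ) ∣ ⌊(a:ℝ) * s⌋ + u - v := by
      have : ((v:ℤ) - ⌊(a:ℝ) * s⌋) % n = ((v:ℤ) - ⌊(a:ℝ) * s⌋) - n * (((v:ℤ) - ⌊(a:ℝ) * s⌋) / n) :=
        Int.emod_def _ _
      rw [hu, this]
      exact ⟨-(((v:ℤ) - ⌊(a:ℝ) * s⌋) / n), by ring⟩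
    obtain ⟨q, hq⟩ := hdvd
    refine ⟨-q, ?_⟩
    have hutn : ((u.toNat : ℕ) : ℝ) = (u : ℝ) := by exact_mod_cast Int.toNat_of_nonneg hu0
    have hqR : (⌊(a:ℝ) * s⌋ : ℝ) + (u:ℝ) - (v:ℝ) = (n:ℝ) * (q:ℝ) := by exact_mod_cast hq
    rw [hutn]
    push_cast
    field_simp
    linarith [hqR, hfr]

lemma inter_iff (n m n₀ m₀ w : ℕ) (a b : ℤ) (hn : 0 < n) (hm : 0 < m)
    (hw : w = Nat.gcd n m) (hw1 : 1 < w) (hn0 : n = w * n₀) (hm0 : m = w * m₀) (s : ℝ) :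
    (bottomBlock w n a s ∩ bottomBlock w m b s).Nonempty ↔
      ∃ K : ℤ, ((a * m - b * n : ℤ) : ℝ) * s = (K : ℝ) * w := by
  have hn₀ : 0 < n₀ := by rcases Nat.eq_zero_or_pos n₀ with h0 | h0; · subst h0; omega
                          · exact h0
  have hm₀ : 0 < m₀ := by rcases Nat.eq_zero_or_pos m₀ with h0 | h0; · subst h0; omega
                          · exact h0
  have hwpos : 0 < w := by omega
  have hnR : (0:ℝ) < n := by exact_mod_cast hn
  have hmR : (0:ℝ) < m := by exact_mod_cast hm
  have hwR : (0:ℝ) < w := by exact_mod_cast hwpos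
  have hnwR : (n:ℝ) = (w:ℝ) * n₀ := by exact_mod_cast congrArg (Nat.cast (R := ℝ)) hn0
  have hmwR : (m:ℝ) = (w:ℝ) * m₀ := by exact_mod_cast congrArg (Nat.cast (R := ℝ)) hm0
  have hfa0 : 0 ≤ Int.fract ((a:ℝ) * s) := Int.fract_nonneg _
  have hfa1 : Int.fract ((a:ℝ) * s) < 1 := Int.fract_lt_one _
  have hfb0 : 0 ≤ Int.fract ((b:ℝ) * s) := Int.fract_nonneg _
  have hfb1 : Int.fract ((b:ℝ) * s) < 1 := Int.fract_lt_one _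
  have hfa : Int.fract ((a:ℝ) * s) = (a:ℝ) * s - (⌊(a:ℝ) * s⌋ : ℝ) := (Int.self_sub_floor _).symm
  have hfb : Int.fract ((b:ℝ) * s) = (b:ℝ) * s - (⌊(b:ℝ) * s⌋ : ℝ) := (Int.self_sub_floor _).symm
  constructor
  · rintro ⟨y, hy1, hy2⟩
    rw [bb_mem w n n₀ a hn hn0] at hy1
    rw [bb_mem w m m₀ b hm hm0] at hy2
    obtain ⟨v, hv, hyv⟩ := hy1
    obtain ⟨v', hv', hyv'⟩ := hy2
    -- real equality from circle equality on [0,1)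
    have h1 : (Int.fract ((a:ℝ) * s) + v) / n ∈ Set.Ico (0:ℝ) (0 + 1) := by
      constructor
      · positivity
      · rw [zero_add, div_lt_one hnR]
        have : (v:ℝ) + 1 ≤ n₀ := by exact_mod_cast hv
        have : (n₀:ℝ) ≤ n := by
          rw [hnwR]; nlinarith [hwR, (by exact_mod_cast hw1 : (1:ℝ) < w)]
        linarith
    have h2 : (Int.fract ((b:ℝ) * s) + v') / m ∈ Set.Ico (0:ℝ) (0 + 1) := by
      constructor
      · positivity
      · rw [zero_add, div_lt_one hmR]
        have : (v':ℝ) + 1 ≤ m₀ := by exact_mod_cast hv'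
        have : (m₀:ℝ) ≤ m := by
          rw [hmwR]; nlinarith [hwR, (by exact_mod_cast hw1 : (1:ℝ) < w)]
        linarith
    have heq : (Int.fract ((a:ℝ) * s) + v) / n = (Int.fract ((b:ℝ) * s) + v') / m := by
      have : ((((Int.fract ((a:ℝ) * s) + v) / n : ℝ)) : UnitAddCircle) =
          ↑((Int.fract ((b:ℝ) * s) + v') / m : ℝ) := by rw [← hyv, ← hyv']
      exact (AddCircle.coe_eq_coe_iff_of_mem_Ico h1 h2).mp this
    have E1 : (m:ℝ) * (Int.fract ((a:ℝ) * s) + v) = (n:ℝ) * (Int.fract ((b:ℝ) * s) + v') := by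
      rw [div_eq_div_iff hnR.ne' hmR.ne'] at heq; linarith
    refine ⟨(n₀:ℤ) * v' - m₀ * v + m₀ * ⌊(a:ℝ) * s⌋ - n₀ * ⌊(b:ℝ) * s⌋, ?_⟩
    push_cast
    linear_combination -(m:ℝ) * hfa + (n:ℝ) * hfb + E1 +
      ((v':ℝ) - (⌊(b:ℝ) * s⌋ : ℝ)) * hnwR + ((⌊(a:ℝ) * s⌋ : ℝ) - (v:ℝ)) * hmwR
  · rintro ⟨K, hK⟩
    obtain ⟨A, hA⟩ : ∃ A : ℤ, A = ⌊(a:ℝ) * s⌋ := ⟨_, rfl⟩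
    obtain ⟨B, hB⟩ : ∃ B : ℤ, B = ⌊(b:ℝ) * s⌋ := ⟨_, rfl⟩
    obtain ⟨K', hK'⟩ : ∃ K' : ℤ, K' = K - m₀ * A + n₀ * B := ⟨_, rfl⟩
    rw [← hA] at hfa
    rw [← hB] at hfb
    push_cast at hK
    have key : (m:ℝ) * Int.fract ((a:ℝ) * s) - n * Int.fract ((b:ℝ) * s) = (K':ℝ) * w := by
      have hK'R : (K':ℝ) = (K:ℝ) - (m₀:ℝ) * A + (n₀:ℝ) * B := by exact_mod_cast congrArg (fun z : ℤ => (z:ℝ)) hK'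
      linear_combination hK + (m:ℝ) * hfa - (n:ℝ) * hfb + ((B:ℝ)) * hnwR - ((A:ℝ)) * hmwR
        - (w:ℝ) * hK'R
    have hKlo : -(n₀:ℤ) < K' := by
      have hr : -((n₀:ℝ)) < K' := by
        have h2 : (w:ℝ) * (-(n₀:ℝ)) = -(n:ℝ) := by rw [hnwR]; ring
        have h1 : (w:ℝ) * (-(n₀:ℝ)) < w * K' := by
          have e : (w:ℝ) * K' = (K':ℝ) * w := by ring
          rw [e]
          linarith [mul_nonneg hmR.le hfa0,
            mul_pos hnR (by linarith : (0:ℝ) < 1 - Int.fract ((b:ℝ) * s)), key, h2]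
        exact lt_of_mul_lt_mul_left h1 hwR.le
      exact_mod_cast hr
    have hKhi : K' < (m₀:ℤ) := by
      have hr : (K':ℝ) < m₀ := by
        have h2 : (w:ℝ) * (m₀:ℝ) = (m:ℝ) := hmwR.symm
        have h1 : (w:ℝ) * K' < w * (m₀:ℝ) := by
          have e : (w:ℝ) * K' = (K':ℝ) * w := by ring
          rw [e]
          linarith [mul_nonneg hnR.le hfb0,
            mul_pos hmR (by linarith : (0:ℝ) < 1 - Int.fract ((a:ℝ) * s)), key, h2]
        exact lt_of_mul_lt_mul_left h1 hwR.le
      exact_mod_cast hr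
    -- coprimality
    have hcop : Nat.Coprime n₀ m₀ := by
      have h1 : Nat.gcd n m = w * Nat.gcd n₀ m₀ := by rw [hn0, hm0]; exact Nat.gcd_mul_left w n₀ m₀
      have h3 : w * 1 = w * Nat.gcd n₀ m₀ := by
        rw [mul_one]
        calc w = Nat.gcd n m := hw
          _ = w * Nat.gcd n₀ m₀ := h1
      exact (Nat.eq_of_mul_eq_mul_left hwpos h3).symm
    have hic : IsCoprime (n₀:ℤ) (m₀:ℤ) := by
      rw [Int.isCoprime_iff_gcd_eq_one]
      exact_mod_cast hcop
    obtain ⟨x, yy, hxy⟩ := hic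
    obtain ⟨v', hv'def⟩ : ∃ v' : ℤ, v' = (K' * x) % m₀ := ⟨_, rfl⟩
    have hm₀' : (0:ℤ) < m₀ := by exact_mod_cast hm₀
    have hn₀' : (0:ℤ) < n₀ := by exact_mod_cast hn₀
    have hv'0 : 0 ≤ v' := hv'def ▸ Int.emod_nonneg _ (by omega)
    have hv'm : v' < m₀ := hv'def ▸ Int.emod_lt_of_pos _ hm₀'
    have ht : v' = K' * x - m₀ * ((K' * x) / m₀) := hv'def ▸ Int.emod_def _ _
    have hdvd : (m₀:ℤ) ∣ (n₀:ℤ) * v' - K' :=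
      ⟨-(K' * yy) - n₀ * ((K' * x) / m₀), by linear_combination (n₀:ℤ) * ht + K' * hxy⟩
    obtain ⟨v, hvdef⟩ : ∃ v : ℤ, v = ((n₀:ℤ) * v' - K') / m₀ := ⟨_, rfl⟩
    have hvq : (m₀:ℤ) * v = (n₀:ℤ) * v' - K' := hvdef ▸ Int.mul_ediv_cancel' hdvd
    have hv0 : 0 ≤ v := by
      have h1 : (m₀:ℤ) * (-1) < m₀ * v := by
        linarith [hvq, mul_nonneg hn₀'.le hv'0, hKhi]
      have := lt_of_mul_lt_mul_left h1 hm₀'.le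
      omega
    have hvn : v < (n₀:ℤ) := by
      have h1 : (m₀:ℤ) * v < m₀ * n₀ := by
        linarith [hvq, mul_le_mul_of_nonneg_left (by omega : v' ≤ (m₀:ℤ) - 1) hn₀'.le, hKlo]
      exact lt_of_mul_lt_mul_left h1 hm₀'.le
    -- the common value
    have hreal : (Int.fract ((a:ℝ) * s) + (v.toNat : ℕ)) / n
        = (Int.fract ((b:ℝ) * s) + (v'.toNat : ℕ)) / m := by
      have hvt : ((v.toNat : ℕ) : ℝ) = ((v:ℤ) : ℝ) := by exact_mod_cast Int.toNat_of_nonneg hv0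
      have hv't : ((v'.toNat : ℕ) : ℝ) = ((v':ℤ) : ℝ) := by exact_mod_cast Int.toNat_of_nonneg hv'0
      rw [hvt, hv't, div_eq_div_iff hnR.ne' hmR.ne']
      have hvqR : (m₀:ℝ) * ((v:ℤ):ℝ) = (n₀:ℝ) * ((v':ℤ):ℝ) - (K':ℝ) := by exact_mod_cast hvq
      linear_combination key + (w:ℝ) * hvqR + ((v:ℤ):ℝ) * hmwR - ((v':ℤ):ℝ) * hnwR
    refine ⟨↑((Int.fract ((a:ℝ) * s) + (v.toNat : ℕ)) / n : ℝ), ?_, ?_⟩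
    · rw [bb_mem w n n₀ a hn hn0]
      exact ⟨v.toNat, by omega, rfl⟩
    · rw [bb_mem w m m₀ b hm hm0]
      exact ⟨v'.toNat, by omega, by rw [hreal]⟩

theorem stmt_15 (n m n₀ m₀ : ℕ) (a b : ℤ) (hn : 0 < n) (hm : 0 < m)
    (w : ℕ) (hw : w = Nat.gcd n m) (hw1 : 1 < w)
    (hn0 : n = w * n₀) (hm0 : m = w * m₀)
    (h : a * m ≠ b * n) :
    {s : ℝ | s ∈ Set.Ico (0 : ℝ) 1 ∧ (bottomBlock w n a s ∩ bottomBlock w m b s).Nonempty} =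
      {s : ℝ | ∃ j : ℕ, j < (a * m - b * n).natAbs / w ∧
        s = (j : ℝ) * w / (a * m - b * n).natAbs} ∧
    {s : ℝ | s ∈ Set.Ico (0 : ℝ) 1 ∧
        (bottomBlock w n a s ∩ bottomBlock w m b s).Nonempty}.ncard =
      (a * m - b * n).natAbs / w := by
  have hwpos : 0 < w := by omega
  obtain ⟨D, hDdef⟩ : ∃ D : ℤ, D = a * m - b * n := ⟨_, rfl⟩
  rw [← hDdef]
  have hD : D ≠ 0 := hDdef ▸ sub_ne_zero.mpr h
  obtain ⟨E, hDE⟩ : ∃ E : ℤ, D = (w:ℤ) * E := by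
    refine ⟨a * m₀ - b * n₀, ?_⟩
    have : (m:ℤ) = (w:ℤ) * m₀ := by exact_mod_cast congrArg (fun x : ℕ => (x:ℤ)) hm0
    have h2 : (n:ℤ) = (w:ℤ) * n₀ := by exact_mod_cast congrArg (fun x : ℕ => (x:ℤ)) hn0
    rw [hDdef, this, h2]; ring
  have hE : E ≠ 0 := by
    intro h0; exact hD (by rw [hDE, h0, mul_zero])
  obtain ⟨N, hNdef⟩ : ∃ N : ℕ, N = D.natAbs := ⟨_, rfl⟩
  rw [← hNdef]
  obtain ⟨c, hcdef⟩ : ∃ c : ℕ, c = E.natAbs := ⟨_, rfl⟩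
  have hNc : N = w * c := by
    rw [hNdef, hDE, Int.natAbs_mul, ← hcdef]; simp
  have hNw : N / w = c := by rw [hNc]; exact Nat.mul_div_cancel_left c hwpos
  have hc0 : 0 < c := hcdef ▸ Int.natAbs_pos.mpr hE
  have hN0 : 0 < N := by omega
  have hNR : (0:ℝ) < N := by exact_mod_cast hN0
  have hwR : (0:ℝ) < w := by exact_mod_cast hwpos
  have hDR : ((D:ℤ):ℝ) ≠ 0 := by exact_mod_cast hD
  have hER : ((E:ℤ):ℝ) ≠ 0 := by exact_mod_cast hE
  have hDEr : ((D:ℤ):ℝ) = (w:ℝ) * ((E:ℤ):ℝ) := by exact_mod_cast congrArg (fun z : ℤ => (z:ℝ)) hDE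
  -- |D| as a real
  have habs : ((N:ℕ):ℝ) = |((D:ℤ):ℝ)| := by
    rw [hNdef]
    push_cast [Nat.cast_natAbs]
    norm_num
  have hset : {s : ℝ | s ∈ Set.Ico (0 : ℝ) 1 ∧
      (bottomBlock w n a s ∩ bottomBlock w m b s).Nonempty} =
      {s : ℝ | ∃ j : ℕ, j < N / w ∧ s = (j : ℝ) * w / N} := by
    ext s
    simp only [Set.mem_setOf_eq, Set.mem_Ico]
    rw [inter_iff n m n₀ m₀ w a b hn hm hw hw1 hn0 hm0 s, ← hDdef]
    constructor
    · rintro ⟨⟨hs0, hs1⟩, K, hK⟩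
      rw [hNw]
      rcases lt_or_gt_of_ne hD with hDneg | hDpos
      · -- D < 0, E < 0
        have hEneg : E < 0 := by
          rcases lt_trichotomy E 0 with h' | h' | h'
          · exact h'
          · exact absurd h' hE
          · exfalso; have : 0 < (w:ℤ) * E := mul_pos (by exact_mod_cast hwpos) h'
            omega
        have hDRneg : ((D:ℤ):ℝ) < 0 := by exact_mod_cast hDneg
        have hKle : K ≤ 0 := by
          by_contra hc'
          push_neg at hc'
          have h1 : (1:ℝ) ≤ (K:ℝ) := by exact_mod_cast hc'
          have h2 : ((D:ℤ):ℝ) * s ≤ 0 := mul_nonpos_of_nonpos_of_nonneg hDRneg.le hs0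
          nlinarith
        have hKgt : E < K := by
          by_contra hc'
          push_neg at hc'
          have h1 : (K:ℝ) ≤ (E:ℝ) := by exact_mod_cast hc'
          have h2 : ((D:ℤ):ℝ) * s > ((D:ℤ):ℝ) := by
            nlinarith [mul_lt_mul_of_neg_left hs1 hDRneg]
          rw [hK, hDEr] at h2
          nlinarith
        refine ⟨(-K).toNat, by omega, ?_⟩
        have hNDR : ((N:ℕ):ℝ) = -((D:ℤ):ℝ) := by rw [habs, abs_of_neg hDRneg]
        have hKR : (((-K).toNat : ℕ):ℝ) = -((K:ℤ):ℝ) := by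
          have : ((-K).toNat : ℤ) = -K := Int.toNat_of_nonneg (by omega)
          exact_mod_cast congrArg (fun z : ℤ => (z:ℝ)) this
        have hs' : s = (K:ℝ) * w / ((D:ℤ):ℝ) := by
          rw [eq_div_iff hDR]; linarith [hK]
        rw [hKR, hNDR, neg_mul, neg_div_neg_eq]
        exact hs'
      · -- D > 0
        have hDRpos : (0:ℝ) < ((D:ℤ):ℝ) := by exact_mod_cast hDpos
        have hEpos : 0 < E := by
          rcases lt_trichotomy E 0 with h' | h' | h'
          · exfalso; have : (w:ℤ) * E < 0 := mul_neg_of_pos_of_neg (by exact_mod_cast hwpos) h'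
            omega
          · exact absurd h' hE
          · exact h'
        have hKge : 0 ≤ K := by
          by_contra hc'
          push_neg at hc'
          have h1 : (K:ℝ) ≤ -1 := by exact_mod_cast (by omega : K ≤ -1)
          have h2 : (0:ℝ) ≤ ((D:ℤ):ℝ) * s := mul_nonneg hDRpos.le hs0
          have h3 : (K:ℝ) * w ≤ -1 * w := mul_le_mul_of_nonneg_right h1 hwR.le
          linarith [hK, h2, h3, hwR]
        have hKlt : K < E := by
          by_contra hc'
          push_neg at hc'
          have h1 : ((E:ℤ):ℝ) ≤ (K:ℝ) := by exact_mod_cast hc'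
          have h2 : ((D:ℤ):ℝ) * s < ((D:ℤ):ℝ) := by
            have := mul_lt_mul_of_pos_left hs1 hDRpos
            simpa using this
          rw [hK, hDEr] at h2
          have h3 : ((E:ℤ):ℝ) * w ≤ (K:ℝ) * w := mul_le_mul_of_nonneg_right h1 hwR.le
          linarith [h2, h3]
        refine ⟨K.toNat, by omega, ?_⟩
        have hNDR : ((N:ℕ):ℝ) = ((D:ℤ):ℝ) := by rw [habs, abs_of_pos hDRpos]
        have hKR : ((K.toNat : ℕ):ℝ) = ((K:ℤ):ℝ) := by
          have : (K.toNat : ℤ) = K := Int.toNat_of_nonneg hKge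
          exact_mod_cast congrArg (fun z : ℤ => (z:ℝ)) this
        have hs' : s = (K:ℝ) * w / ((D:ℤ):ℝ) := by
          rw [eq_div_iff hDR]; linarith [hK]
        rw [hKR, hNDR]
        exact hs'
    · rintro ⟨j, hj, hs⟩
      rw [hNw] at hj
      have hjR : ((j:ℕ):ℝ) * w < (N:ℝ) := by
        have h1 : (j:ℝ) ≤ (c:ℝ) - 1 := by
          have : (j:ℝ) + 1 ≤ c := by exact_mod_cast hj
          linarith
        have h2 : ((N:ℕ):ℝ) = (w:ℝ) * c := by exact_mod_cast congrArg (fun x : ℕ => (x:ℝ)) hNc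
        have h3 : (j:ℝ) * w ≤ ((c:ℝ) - 1) * w := mul_le_mul_of_nonneg_right h1 hwR.le
        linarith [h2, h3, hwR]
      constructor
      · constructor
        · rw [hs]; positivity
        · rw [hs, div_lt_one hNR]; linarith
      · rcases lt_or_gt_of_ne hD with hDneg | hDpos
        · refine ⟨-j, ?_⟩
          have hDRneg : ((D:ℤ):ℝ) < 0 := by exact_mod_cast hDneg
          have hNDR : ((N:ℕ):ℝ) = -((D:ℤ):ℝ) := by rw [habs, abs_of_neg hDRneg]
          rw [hs]
          push_cast
          rw [hNDR]
          field_simp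
        · refine ⟨j, ?_⟩
          have hDRpos : (0:ℝ) < ((D:ℤ):ℝ) := by exact_mod_cast hDpos
          have hNDR : ((N:ℕ):ℝ) = ((D:ℤ):ℝ) := by rw [habs, abs_of_pos hDRpos]
          rw [hs]
          push_cast
          rw [hNDR]
          field_simp
  refine ⟨hset, ?_⟩
  rw [hset, hNw]
  have himg : {s : ℝ | ∃ j : ℕ, j < c ∧ s = (j : ℝ) * w / N} =
      ↑((Finset.range c).image (fun j : ℕ => (j : ℝ) * w / N)) := by
    ext s
    simp only [Set.mem_setOf_eq, Finset.coe_image, Set.mem_image, Finset.mem_coe,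
      Finset.mem_range]
    constructor
    · rintro ⟨j, hj, hs⟩; exact ⟨j, hj, hs.symm⟩
    · rintro ⟨j, hj, hs⟩; exact ⟨j, hj, hs.symm⟩
  rw [himg, Set.ncard_coe_finset]
  rw [Finset.card_image_of_injOn, Finset.card_range]
  intro j1 _ j2 _ hh
  have hww : (w:ℝ) ≠ 0 := hwR.ne'
  have hNN : (N:ℝ) ≠ 0 := hNR.ne'
  field_simp at hh
  exact_mod_cast (by linarith : (j1:ℝ) = j2)
end
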